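/- Let P be a finite projective plane and M_P the associated simple rank-3 matroid. The class of finite simple ∧-matroids of rank ≤ 3 omitting M_P has the amalgamation property: whenever M0, M1, M2 are finite simple ∧-matroids of rank ≤ 3 omitting M_P and f1 : M0 → M1, f2 : M0 → M2 are embeddings, there exist a finite simple ∧-matroid M3 of rank ≤ 3 omitting M_P and embeddings g1 : M1 → M3, g2 : M2 → M3 with g1 ∘ f1 = g2 ∘ f2. -/
import Mathlib


namespace PaoliniMatroids

open Function Set

/-- The "line" through `a` and `b` determined by a ternary collinearity relation `R`:
the set `{a, b} ∪ {x | R a b x}`. -/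
def lineOf {V : Type*} (R : V → V → V → Prop) (a b : V) : Set V :=
  {a, b} ∪ {x | R a b x}

/-- A simple ∧-matroid of rank ≤ 3, with domain `carrier` inside the ambient type `V`.
`R` is the ternary dependency (collinearity) relation and `wedge` is the 4-ary
intersection-of-lines function determined by `R`. -/
structure WM (V : Type*) where
  carrier : Set V
  R : V → V → V → Prop
  wedge : V → V → V → V → V
  R_mem : ∀ a b c, R a b c → a ∈ carrier ∧ b ∈ carrier ∧ c ∈ carrier
  wedge_mem : ∀ a b c d, a ∈ carrier → b ∈ carrier → c ∈ carrier → d ∈ carrier →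
      wedge a b c d ∈ carrier
  irrefl : ∀ a b c, R a b c → a ≠ b ∧ a ≠ c ∧ b ≠ c
  symm_swap : ∀ a b c, R a b c → R b a c
  symm_rot : ∀ a b c, R a b c → R b c a
  exchange : ∀ a b c d, R a b c → R a b d → ∀ x y z,
      x ∈ ({a, b, c, d} : Set V) → y ∈ ({a, b, c, d} : Set V) → z ∈ ({a, b, c, d} : Set V) →
      x ≠ y → x ≠ z → y ≠ z → R x y z
  wedge_det : ∀ a b c d, a ∈ carrier → b ∈ carrier → c ∈ carrier → d ∈ carrier →
      (a ≠ b ∧ c ≠ d ∧ lineOf R a b ≠ lineOf R c d ∧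
        wedge a b c d ∈ lineOf R a b ∧ wedge a b c d ∈ lineOf R c d ∧
        wedge a b c d ∉ ({a, b, c, d} : Set V)) ∨
      (wedge a b c d = a ∧ ¬ ∃ p, a ≠ b ∧ c ≠ d ∧ lineOf R a b ≠ lineOf R c d ∧
        p ∈ lineOf R a b ∧ p ∈ lineOf R c d ∧ p ∉ ({a, b, c, d} : Set V))

/-- An embedding of ∧-matroids: an injective map (on the domain) preserving `R`
in both directions and preserving the ∧-function. -/
structure IsEmb {V W : Type*} (M : WM V) (N : WM W) (f : V → W) : Prop where
  maps : ∀ x ∈ M.carrier, f x ∈ N.carrier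
  inj : ∀ x ∈ M.carrier, ∀ y ∈ M.carrier, f x = f y → x = y
  rel : ∀ a ∈ M.carrier, ∀ b ∈ M.carrier, ∀ c ∈ M.carrier,
      (M.R a b c ↔ N.R (f a) (f b) (f c))
  wedge : ∀ a ∈ M.carrier, ∀ b ∈ M.carrier, ∀ c ∈ M.carrier, ∀ d ∈ M.carrier,
      f (M.wedge a b c d) = N.wedge (f a) (f b) (f c) (f d)

/-- An isomorphism of ∧-matroids: an embedding which is onto the target domain. -/
def IsIso {V W : Type*} (M : WM V) (N : WM W) (f : V → W) : Prop :=
  IsEmb M N f ∧ N.carrier ⊆ f '' M.carrier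

/-- `M` is a substructure of `N`: the domain of `M` is a subset of that of `N`
(necessarily closed under the ∧-function of `N`) and `R`, `∧` are induced. -/
structure Sub {V : Type*} (M N : WM V) : Prop where
  sub : M.carrier ⊆ N.carrier
  rel : ∀ a ∈ M.carrier, ∀ b ∈ M.carrier, ∀ c ∈ M.carrier, (M.R a b c ↔ N.R a b c)
  wedge : ∀ a ∈ M.carrier, ∀ b ∈ M.carrier, ∀ c ∈ M.carrier, ∀ d ∈ M.carrier,
      M.wedge a b c d = N.wedge a b c d

/-- The matroid has rank 3: there are three (pairwise distinct) non-collinear points. -/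
def Rank3 {V : Type*} (M : WM V) : Prop :=
  ∃ a ∈ M.carrier, ∃ b ∈ M.carrier, ∃ c ∈ M.carrier,
    a ≠ b ∧ a ≠ c ∧ b ≠ c ∧ ¬ M.R a b c

/-- An automorphism of a ∧-matroid: a bijection of the domain preserving `R` in both
directions and preserving the ∧-function. -/
def IsAut {V : Type*} (M : WM V) (g : V → V) : Prop :=
  Set.BijOn g M.carrier M.carrier ∧
  (∀ a ∈ M.carrier, ∀ b ∈ M.carrier, ∀ c ∈ M.carrier,
      (M.R a b c ↔ M.R (g a) (g b) (g c))) ∧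
  (∀ a ∈ M.carrier, ∀ b ∈ M.carrier, ∀ c ∈ M.carrier, ∀ d ∈ M.carrier,
      g (M.wedge a b c d) = M.wedge (g a) (g b) (g c) (g d))

/-- A projective plane: a point-line incidence system where two distinct points lie on a
unique common line, two distinct lines meet in a unique point, and there are four points
no three of which are collinear. -/
structure ProjPlane where
  Point : Type
  Line : Type
  incid : Point → Line → Prop
  unique_line : ∀ p q : Point, p ≠ q → ∃! l : Line, incid p l ∧ incid q l
  unique_point : ∀ l m : Line, l ≠ m → ∃! p : Point, incid p l ∧ incid p m
  nondeg : ∃ p₁ p₂ p₃ p₄ : Point, p₁ ≠ p₂ ∧ p₁ ≠ p₃ ∧ p₁ ≠ p₄ ∧ p₂ ≠ p₃ ∧ p₂ ≠ p₄ ∧ p₃ ≠ p₄ ∧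
    ∀ l : Line, ¬(incid p₁ l ∧ incid p₂ l ∧ incid p₃ l) ∧
      ¬(incid p₁ l ∧ incid p₂ l ∧ incid p₄ l) ∧
      ¬(incid p₁ l ∧ incid p₃ l ∧ incid p₄ l) ∧
      ¬(incid p₂ l ∧ incid p₃ l ∧ incid p₄ l)

/-- The ternary relation of the simple rank-3 matroid `M_P` associated with a projective
plane: `R a b c` iff `a, b, c` are pairwise distinct collinear points. -/
def ProjPlane.Rmat (P : ProjPlane) (a b c : P.Point) : Prop :=
  a ≠ b ∧ a ≠ c ∧ b ≠ c ∧ ∃ l : P.Line, P.incid a l ∧ P.incid b l ∧ P.incid c l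

/-- `N` omits the matroid `M_P` of the projective plane `P`: no subset of the domain of `N`,
with the induced ternary relation, is isomorphic (as a matroid) to `M_P`. -/
def Omits {V : Type*} (N : WM V) (P : ProjPlane) : Prop :=
  ¬ ∃ e : P.Point → V, Function.Injective e ∧ (∀ p, e p ∈ N.carrier) ∧
      ∀ a b c, P.Rmat a b c ↔ N.R (e a) (e b) (e c)

section Generic

variable {V : Type*} (M : WM V)

lemma mem_lineOf {R : V → V → V → Prop} {a b z : V} :
    z ∈ lineOf R a b ↔ z = a ∨ z = b ∨ R a b z := by
  simp [lineOf, Set.mem_insert_iff, Set.mem_setOf_eq, or_assoc]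

lemma lineOf_left {R : V → V → V → Prop} (a b : V) : a ∈ lineOf R a b :=
  mem_lineOf.2 (Or.inl rfl)

lemma lineOf_right {R : V → V → V → Prop} (a b : V) : b ∈ lineOf R a b :=
  mem_lineOf.2 (Or.inr (Or.inl rfl))

namespace WM

lemma symm_acb {a b c : V} (h : M.R a b c) : M.R a c b :=
  M.symm_rot _ _ _ (M.symm_swap _ _ _ h)

lemma symm_cab {a b c : V} (h : M.R a b c) : M.R c a b :=
  M.symm_rot _ _ _ (M.symm_rot _ _ _ h)

lemma symm_bac {a b c : V} (h : M.R a b c) : M.R b a c :=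
  M.symm_swap _ _ _ h

lemma symm_bca {a b c : V} (h : M.R a b c) : M.R b c a :=
  M.symm_rot _ _ _ h

lemma symm_cba {a b c : V} (h : M.R a b c) : M.R c b a :=
  M.symm_swap _ _ _ (M.symm_rot _ _ _ h)

lemma exch {a b c d : V} (h1 : M.R a b c) (h2 : M.R a b d) {x y z : V}
    (hx : x = a ∨ x = b ∨ x = c ∨ x = d) (hy : y = a ∨ y = b ∨ y = c ∨ y = d)
    (hz : z = a ∨ z = b ∨ z = c ∨ z = d)
    (hxy : x ≠ y) (hxz : x ≠ z) (hyz : y ≠ z) : M.R x y z := by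
  refine M.exchange a b c d h1 h2 x y z ?_ ?_ ?_ hxy hxz hyz <;>
    simp only [Set.mem_insert_iff, Set.mem_singleton_iff] <;> tauto

lemma line_swap (a b : V) : lineOf M.R a b = lineOf M.R b a := by
  ext z
  simp only [mem_lineOf]
  constructor <;> rintro (h | h | h) <;> try tauto
  · exact Or.inr (Or.inr (M.symm_bac h))
  · exact Or.inr (Or.inr (M.symm_bac h))

lemma line_pivot {p q w : V} (hpq : p ≠ q) (h : M.R p q w) :
    lineOf M.R p w = lineOf M.R p q := by
  obtain ⟨hpq', hpw, hqw⟩ := M.irrefl _ _ _ h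
  ext z
  simp only [mem_lineOf]
  constructor
  · rintro (rfl | rfl | hz)
    · exact Or.inl rfl
    · exact Or.inr (Or.inr h)
    · obtain ⟨-, hpz, hwz⟩ := M.irrefl _ _ _ hz
      by_cases hzq : z = q
      · exact Or.inr (Or.inl hzq)
      · exact Or.inr (Or.inr (M.exch (M.symm_acb h) hz
          (by tauto) (by tauto) (by tauto) hpq hpz (fun hq => hzq hq.symm)))
  · rintro (rfl | rfl | hz)
    · exact Or.inl rfl
    · exact Or.inr (Or.inr (M.symm_acb h))
    · obtain ⟨-, hpz, hqz⟩ := M.irrefl _ _ _ hz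
      by_cases hzw : z = w
      · exact Or.inr (Or.inl hzw)
      · exact Or.inr (Or.inr (M.exch h hz
          (by tauto) (by tauto) (by tauto) hpw hpz (fun hw => hzw hw.symm)))

lemma line_eq {p q x y : V} (hpq : p ≠ q) (hx : x ∈ lineOf M.R p q)
    (hy : y ∈ lineOf M.R p q) (hxy : x ≠ y) :
    lineOf M.R x y = lineOf M.R p q := by
  rw [mem_lineOf] at hx hy
  rcases hx with rfl | rfl | hx
  · rcases hy with rfl | rfl | hy
    · exact absurd rfl hxy
    · rfl
    · exact M.line_pivot hpq hy
  · rcases hy with rfl | rfl | hy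
    · exact M.line_swap _ _
    · exact absurd rfl hxy
    · exact ((M.line_pivot (Ne.symm hpq) (M.symm_bac hy)).trans (M.line_swap _ _))
  · have hpx := (M.irrefl _ _ _ hx).2.1
    have hqx := (M.irrefl _ _ _ hx).2.2
    rcases hy with rfl | rfl | hy
    · exact (M.line_swap _ _).trans (M.line_pivot hpq hx)
    · exact (M.line_swap _ _).trans
        ((M.line_pivot (Ne.symm hpq) (M.symm_bac hx)).trans (M.line_swap _ _))
    · have hpy := (M.irrefl _ _ _ hy).2.1
      have hRpxy : M.R p x y := M.exch hx hy (by tauto) (by tauto) (by tauto)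
        hpx hpy hxy
      have h1 : lineOf M.R x y = lineOf M.R x p :=
        M.line_pivot (Ne.symm hpx) (M.symm_bac hRpxy)
      rw [h1, M.line_swap]
      exact M.line_pivot hpq hx

lemma coll3 {p q x y z : V} (hpq : p ≠ q) (hx : x ∈ lineOf M.R p q)
    (hy : y ∈ lineOf M.R p q) (hz : z ∈ lineOf M.R p q)
    (hxy : x ≠ y) (hxz : x ≠ z) (hyz : y ≠ z) : M.R x y z := by
  rw [← M.line_eq hpq hx hy hxy, mem_lineOf] at hz
  rcases hz with rfl | rfl | hz
  · exact absurd rfl hxz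
  · exact absurd rfl hyz
  · exact hz

lemma uniq_inter {a b c d x y : V} (hab : a ≠ b) (hcd : c ≠ d)
    (hx1 : x ∈ lineOf M.R a b) (hx2 : x ∈ lineOf M.R c d)
    (hy1 : y ∈ lineOf M.R a b) (hy2 : y ∈ lineOf M.R c d)
    (hxy : x ≠ y) : lineOf M.R a b = lineOf M.R c d := by
  rw [← M.line_eq hab hx1 hy1 hxy, ← M.line_eq hcd hx2 hy2 hxy]

end WM
end Generic
section Plane

namespace ProjPlane

variable (P : ProjPlane)

/-- The line through two distinct points. -/
noncomputable def lineThru {p q : P.Point} (h : p ≠ q) : P.Line :=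
  (P.unique_line p q h).choose

lemma lineThru_left {p q : P.Point} (h : p ≠ q) : P.incid p (P.lineThru h) :=
  (P.unique_line p q h).choose_spec.1.1

lemma lineThru_right {p q : P.Point} (h : p ≠ q) : P.incid q (P.lineThru h) :=
  (P.unique_line p q h).choose_spec.1.2

lemma lineThru_eq {p q : P.Point} (h : p ≠ q) {l : P.Line}
    (hp : P.incid p l) (hq : P.incid q l) : l = P.lineThru h :=
  (P.unique_line p q h).choose_spec.2 l ⟨hp, hq⟩

lemma line_unique {p q : P.Point} (h : p ≠ q) {l m : P.Line}
    (hp : P.incid p l) (hq : P.incid q l) (hp' : P.incid p m) (hq' : P.incid q m) :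
    l = m := by
  rw [P.lineThru_eq h hp hq, P.lineThru_eq h hp' hq']

/-- The intersection point of two distinct lines. -/
noncomputable def interPt {l m : P.Line} (h : l ≠ m) : P.Point :=
  (P.unique_point l m h).choose

lemma interPt_left {l m : P.Line} (h : l ≠ m) : P.incid (P.interPt h) l :=
  (P.unique_point l m h).choose_spec.1.1

lemma interPt_right {l m : P.Line} (h : l ≠ m) : P.incid (P.interPt h) m :=
  (P.unique_point l m h).choose_spec.1.2

lemma interPt_eq {l m : P.Line} (h : l ≠ m) {p : P.Point}
    (hp : P.incid p l) (hp' : P.incid p m) : p = P.interPt h :=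
  (P.unique_point l m h).choose_spec.2 p ⟨hp, hp'⟩

lemma point_unique {l m : P.Line} (h : l ≠ m) {p q : P.Point}
    (hp : P.incid p l) (hp' : P.incid p m) (hq : P.incid q l) (hq' : P.incid q m) :
    p = q := by
  rw [P.interPt_eq h hp hp', P.interPt_eq h hq hq']

/-- two frame points on `l`: get a third point on `l`. -/
lemma three_on_line_B {a b c d : P.Point} {l : P.Line}
    (hab : a ≠ b) (hcd : c ≠ d)
    (H1 : ∀ m, P.incid a m → P.incid b m → P.incid c m → False)
    (H2 : ∀ m, P.incid a m → P.incid c m → P.incid d m → False)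
    (H3 : ∀ m, P.incid b m → P.incid c m → P.incid d m → False)
    (ha : P.incid a l) (hb : P.incid b l) :
    ∃ x y z : P.Point, x ≠ y ∧ x ≠ z ∧ y ≠ z ∧ P.incid x l ∧ P.incid y l ∧ P.incid z l := by
  have hcl : ¬ P.incid c l := fun hc => H1 l ha hb hc
  have hlm : l ≠ P.lineThru hcd := by
    intro he; exact hcl (he ▸ P.lineThru_left hcd)
  refine ⟨a, b, P.interPt hlm, hab, ?_, ?_, ha, hb, P.interPt_left hlm⟩
  · intro he
    exact H2 _ (by rw [he]; exact P.interPt_right hlm)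
      (P.lineThru_left hcd) (P.lineThru_right hcd)
  · intro he
    exact H3 _ (by rw [he]; exact P.interPt_right hlm)
      (P.lineThru_left hcd) (P.lineThru_right hcd)

/-- three frame points off `l`: get three points on `l`. -/
lemma three_on_line_A {b c d : P.Point} {l : P.Line}
    (hbc : b ≠ c) (hbd : b ≠ d) (hcd : c ≠ d)
    (H : ∀ m, P.incid b m → P.incid c m → P.incid d m → False)
    (hb : ¬ P.incid b l) (hc : ¬ P.incid c l) (hd : ¬ P.incid d l) :
    ∃ x y z : P.Point, x ≠ y ∧ x ≠ z ∧ y ≠ z ∧ P.incid x l ∧ P.incid y l ∧ P.incid z l := by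
  have h1 : l ≠ P.lineThru hbc := fun he => hb (he ▸ P.lineThru_left hbc)
  have h2 : l ≠ P.lineThru hbd := fun he => hb (he ▸ P.lineThru_left hbd)
  have h3 : l ≠ P.lineThru hcd := fun he => hc (he ▸ P.lineThru_left hcd)
  have hm12 : P.lineThru hbc ≠ P.lineThru hbd := by
    intro he
    exact H _ (P.lineThru_left hbc) (P.lineThru_right hbc) (he ▸ P.lineThru_right hbd)
  have hm13 : P.lineThru hbc ≠ P.lineThru hcd := by
    intro he
    exact H _ (P.lineThru_left hbc) (P.lineThru_right hbc) (he ▸ P.lineThru_right hcd)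
  have hm23 : P.lineThru hbd ≠ P.lineThru hcd := by
    intro he
    exact H _ (P.lineThru_left hbd) (he ▸ P.lineThru_left hcd) (P.lineThru_right hbd)
  refine ⟨P.interPt h1, P.interPt h2, P.interPt h3, ?_, ?_, ?_,
    P.interPt_left h1, P.interPt_left h2, P.interPt_left h3⟩
  · intro he
    have : P.interPt h1 = b :=
      P.point_unique hm12 (P.interPt_right h1) (he ▸ P.interPt_right h2)
        (P.lineThru_left hbc) (P.lineThru_left hbd)
    exact hb (this ▸ P.interPt_left h1)
  · intro he
    have : P.interPt h1 = c :=
      P.point_unique hm13 (P.interPt_right h1) (he ▸ P.interPt_right h3)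
        (P.lineThru_right hbc) (P.lineThru_left hcd)
    exact hc (this ▸ P.interPt_left h1)
  · intro he
    have : P.interPt h2 = d :=
      P.point_unique hm23 (P.interPt_right h2) (he ▸ P.interPt_right h3)
        (P.lineThru_right hbd) (P.lineThru_right hcd)
    exact hd (this ▸ P.interPt_left h2)

/-- every line contains three distinct points. -/
lemma three_on_line (l : P.Line) :
    ∃ x y z : P.Point, x ≠ y ∧ x ≠ z ∧ y ≠ z ∧ P.incid x l ∧ P.incid y l ∧ P.incid z l := by
  obtain ⟨p1, p2, p3, p4, h12, h13, h14, h23, h24, h34, hn⟩ := P.nondeg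
  have n123 : ∀ m, P.incid p1 m → P.incid p2 m → P.incid p3 m → False :=
    fun m a b c => (hn m).1 ⟨a, b, c⟩
  have n124 : ∀ m, P.incid p1 m → P.incid p2 m → P.incid p4 m → False :=
    fun m a b c => (hn m).2.1 ⟨a, b, c⟩
  have n134 : ∀ m, P.incid p1 m → P.incid p3 m → P.incid p4 m → False :=
    fun m a b c => (hn m).2.2.1 ⟨a, b, c⟩
  have n234 : ∀ m, P.incid p2 m → P.incid p3 m → P.incid p4 m → False :=
    fun m a b c => (hn m).2.2.2 ⟨a, b, c⟩
  by_cases h1 : P.incid p1 l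
  · by_cases h2 : P.incid p2 l
    · exact P.three_on_line_B h12 h34 n123 n134 n234 h1 h2
    · by_cases h3 : P.incid p3 l
      · exact P.three_on_line_B h13 h24 (fun m a b c => n123 m a c b)
          (fun m a b c => n124 m a b c) (fun m a b c => n234 m b a c) h1 h3
      · by_cases h4 : P.incid p4 l
        · exact P.three_on_line_B h14 h23 (fun m a b c => n124 m a c b)
            (fun m a b c => n123 m a b c) (fun m a b c => n234 m b c a) h1 h4
        · exact P.three_on_line_A h23 h24 h34 n234 h2 h3 h4
  · by_cases h2 : P.incid p2 l
    · by_cases h3 : P.incid p3 l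
      · exact P.three_on_line_B h23 h14 (fun m a b c => n123 m c a b)
          (fun m a b c => n124 m b a c) (fun m a b c => n134 m b a c) h2 h3
      · by_cases h4 : P.incid p4 l
        · exact P.three_on_line_B h24 h13 (fun m a b c => n124 m c a b)
            (fun m a b c => n123 m b a c) (fun m a b c => n134 m b c a) h2 h4
        · exact P.three_on_line_A h13 h14 h34 n134 h1 h3 h4
    · by_cases h3 : P.incid p3 l
      · by_cases h4 : P.incid p4 l
        · exact P.three_on_line_B h34 h12 (fun m a b c => n134 m c a b)
            (fun m a b c => n123 m b c a) (fun m a b c => n124 m b c a) h3 h4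
        · exact P.three_on_line_A h12 h14 h24 n124 h1 h2 h4
      · exact P.three_on_line_A h12 h13 h23 n123 h1 h2 h3

end ProjPlane
end Plane
section Plane2
namespace ProjPlane

variable (P : ProjPlane)

/-- dual: point on two of four lines gives three lines through it. -/
lemma three_thru_B {p : P.Point} {A B C D : P.Line}
    (hab : A ≠ B) (hcd : C ≠ D)
    (H1 : ∀ q, P.incid q A → P.incid q B → P.incid q C → False)
    (H2 : ∀ q, P.incid q A → P.incid q C → P.incid q D → False)
    (H3 : ∀ q, P.incid q B → P.incid q C → P.incid q D → False)
    (ha : P.incid p A) (hb : P.incid p B) :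
    ∃ x y z : P.Line, x ≠ y ∧ x ≠ z ∧ y ≠ z ∧ P.incid p x ∧ P.incid p y ∧ P.incid p z := by
  have hcl : ¬ P.incid p C := fun hc => H1 p ha hb hc
  have hlm : p ≠ P.interPt hcd := by
    intro he; exact hcl (he ▸ P.interPt_left hcd)
  refine ⟨A, B, P.lineThru hlm, hab, ?_, ?_, ha, hb, P.lineThru_left hlm⟩
  · intro he
    exact H2 _ (by rw [he]; exact P.lineThru_right hlm)
      (P.interPt_left hcd) (P.interPt_right hcd)
  · intro he
    exact H3 _ (by rw [he]; exact P.lineThru_right hlm)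
      (P.interPt_left hcd) (P.interPt_right hcd)

lemma three_thru_A {p : P.Point} {B C D : P.Line}
    (hbc : B ≠ C) (hbd : B ≠ D) (hcd : C ≠ D)
    (H : ∀ q, P.incid q B → P.incid q C → P.incid q D → False)
    (hb : ¬ P.incid p B) (hc : ¬ P.incid p C) (hd : ¬ P.incid p D) :
    ∃ x y z : P.Line, x ≠ y ∧ x ≠ z ∧ y ≠ z ∧ P.incid p x ∧ P.incid p y ∧ P.incid p z := by
  have h1 : p ≠ P.interPt hbc := fun he => hb (he ▸ P.interPt_left hbc)
  have h2 : p ≠ P.interPt hbd := fun he => hb (he ▸ P.interPt_left hbd)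
  have h3 : p ≠ P.interPt hcd := fun he => hc (he ▸ P.interPt_left hcd)
  have hm12 : P.interPt hbc ≠ P.interPt hbd := by
    intro he
    exact H _ (P.interPt_left hbc) (P.interPt_right hbc) (he ▸ P.interPt_right hbd)
  have hm13 : P.interPt hbc ≠ P.interPt hcd := by
    intro he
    exact H _ (P.interPt_left hbc) (P.interPt_right hbc) (he ▸ P.interPt_right hcd)
  have hm23 : P.interPt hbd ≠ P.interPt hcd := by
    intro he
    exact H _ (P.interPt_left hbd) (he ▸ P.interPt_left hcd) (P.interPt_right hbd)
  refine ⟨P.lineThru h1, P.lineThru h2, P.lineThru h3, ?_, ?_, ?_,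
    P.lineThru_left h1, P.lineThru_left h2, P.lineThru_left h3⟩
  · intro he
    have : P.lineThru h1 = B :=
      P.line_unique hm12 (P.lineThru_right h1) (by rw [he]; exact P.lineThru_right h2)
        (P.interPt_left hbc) (P.interPt_left hbd)
    exact hb (this ▸ P.lineThru_left h1)
  · intro he
    have : P.lineThru h1 = C :=
      P.line_unique hm13 (P.lineThru_right h1) (by rw [he]; exact P.lineThru_right h3)
        (P.interPt_right hbc) (P.interPt_left hcd)
    exact hc (this ▸ P.lineThru_left h1)
  · intro he
    have : P.lineThru h2 = D :=
      P.line_unique hm23 (P.lineThru_right h2) (by rw [he]; exact P.lineThru_right h3)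
        (P.interPt_right hbd) (P.interPt_right hcd)
    exact hd (this ▸ P.lineThru_left h2)

/-- every point lies on three distinct lines. -/
lemma three_thru (p : P.Point) :
    ∃ x y z : P.Line, x ≠ y ∧ x ≠ z ∧ y ≠ z ∧ P.incid p x ∧ P.incid p y ∧ P.incid p z := by
  obtain ⟨p1, p2, p3, p4, h12, h13, h14, h23, h24, h34, hn⟩ := P.nondeg
  -- four lines: A = p1p2, B = p3p4, C = p1p3, D = p2p4
  set A := P.lineThru h12 with hA
  set B := P.lineThru h34 with hB
  set C := P.lineThru h13 with hC
  set D := P.lineThru h24 with hD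
  have iA1 : P.incid p1 A := P.lineThru_left h12
  have iA2 : P.incid p2 A := P.lineThru_right h12
  have iB3 : P.incid p3 B := P.lineThru_left h34
  have iB4 : P.incid p4 B := P.lineThru_right h34
  have iC1 : P.incid p1 C := P.lineThru_left h13
  have iC3 : P.incid p3 C := P.lineThru_right h13
  have iD2 : P.incid p2 D := P.lineThru_left h24
  have iD4 : P.incid p4 D := P.lineThru_right h24
  have n123 : ∀ m, P.incid p1 m → P.incid p2 m → P.incid p3 m → False :=
    fun m a b c => (hn m).1 ⟨a, b, c⟩
  have n124 : ∀ m, P.incid p1 m → P.incid p2 m → P.incid p4 m → False :=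
    fun m a b c => (hn m).2.1 ⟨a, b, c⟩
  have n134 : ∀ m, P.incid p1 m → P.incid p3 m → P.incid p4 m → False :=
    fun m a b c => (hn m).2.2.1 ⟨a, b, c⟩
  have n234 : ∀ m, P.incid p2 m → P.incid p3 m → P.incid p4 m → False :=
    fun m a b c => (hn m).2.2.2 ⟨a, b, c⟩
  have hAB : A ≠ B := fun he => n134 A iA1 (he ▸ iB3) (he ▸ iB4)
  have hAC : A ≠ C := fun he => n123 A iA1 iA2 (he ▸ iC3)
  have hAD : A ≠ D := fun he => n124 A iA1 iA2 (he ▸ iD4)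
  have hBC : B ≠ C := fun he => n134 B (he ▸ iC1) iB3 iB4
  have hBD : B ≠ D := fun he => n234 B (he ▸ iD2) iB3 iB4
  have hCD : C ≠ D := fun he => n123 C iC1 (he ▸ iD2) iC3
  -- no three concurrent
  have nABC : ∀ q, P.incid q A → P.incid q B → P.incid q C → False := by
    intro q ha hb hc
    have : q = p1 := P.point_unique hAC ha hc iA1 iC1
    exact n134 B (this ▸ hb) iB3 iB4
  have nABD : ∀ q, P.incid q A → P.incid q B → P.incid q D → False := by
    intro q ha hb hd
    have : q = p2 := P.point_unique hAD ha hd iA2 iD2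
    exact n234 B (this ▸ hb) iB3 iB4
  have nACD : ∀ q, P.incid q A → P.incid q C → P.incid q D → False := by
    intro q ha hc hd
    have : q = p1 := P.point_unique hAC ha hc iA1 iC1
    exact n124 D (this ▸ hd) iD2 iD4
  have nBCD : ∀ q, P.incid q B → P.incid q C → P.incid q D → False := by
    intro q hb hc hd
    have : q = p3 := P.point_unique hBC hb hc iB3 iC3
    exact n234 D iD2 (this ▸ hd) iD4
  by_cases h1 : P.incid p A
  · by_cases h2 : P.incid p B
    · exact P.three_thru_B hAB hCD nABC nACD nBCD h1 h2
    · by_cases h3 : P.incid p C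
      · exact P.three_thru_B hAC hBD (fun q a b c => nABC q a c b)
          (fun q a b c => nABD q a b c) (fun q a b c => nBCD q b a c) h1 h3
      · by_cases h4 : P.incid p D
        · exact P.three_thru_B hAD hBC (fun q a b c => nABD q a c b)
            (fun q a b c => nABC q a b c) (fun q a b c => nBCD q b c a) h1 h4
        · exact P.three_thru_A hBC hBD hCD nBCD h2 h3 h4
  · by_cases h2 : P.incid p B
    · by_cases h3 : P.incid p C
      · exact P.three_thru_B hBC hAD (fun q a b c => nABC q c a b)
          (fun q a b c => nABD q b a c) (fun q a b c => nACD q b a c) h2 h3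
      · by_cases h4 : P.incid p D
        · exact P.three_thru_B hBD hAC (fun q a b c => nABD q c a b)
            (fun q a b c => nABC q b a c) (fun q a b c => nACD q b c a) h2 h4
        · exact P.three_thru_A hAC hAD hCD nACD h1 h3 h4
    · by_cases h3 : P.incid p C
      · by_cases h4 : P.incid p D
        · exact P.three_thru_B hCD hAB (fun q a b c => nACD q c a b)
            (fun q a b c => nABC q b c a) (fun q a b c => nABD q b c a) h3 h4
        · exact P.three_thru_A hAB hAD hBD nABD h1 h2 h4
      · exact P.three_thru_A hAB hAC hBC nABC h1 h2 h3

end ProjPlane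
end Plane2
section Plane3
namespace ProjPlane

variable (P : ProjPlane)

/-- on any line there is a point different from two given points. -/
lemma third_point (l : P.Line) (p q : P.Point) :
    ∃ r, r ≠ p ∧ r ≠ q ∧ P.incid r l := by
  obtain ⟨x, y, z, hxy, hxz, hyz, hx, hy, hz⟩ := P.three_on_line l
  by_cases h1 : x ≠ p ∧ x ≠ q
  · exact ⟨x, h1.1, h1.2, hx⟩
  by_cases h2 : y ≠ p ∧ y ≠ q
  · exact ⟨y, h2.1, h2.2, hy⟩
  rcases not_and_or.1 h1 with h | h <;> rcases not_and_or.1 h2 with h' | h' <;>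
    push_neg at h h'
  · exact absurd (h.trans h'.symm) hxy
  · exact ⟨z, fun hz' => hxz (h.trans hz'.symm), fun hz' => hyz (h'.trans hz'.symm), hz⟩
  · exact ⟨z, fun hz' => hyz (h'.trans hz'.symm), fun hz' => hxz (h.trans hz'.symm), hz⟩
  · exact absurd (h.trans h'.symm) hxy

/-- the combinatorial configuration used in the omitting argument. -/
lemma plane_config {px py : P.Point} (hxy : px ≠ py) :
    (∃ t0, P.Rmat px py t0) ∧
    ∃ r1 s1 r2 s2 : P.Point,
      P.Rmat px r1 s1 ∧ P.Rmat px r2 s2 ∧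
      ¬ P.Rmat px py r1 ∧ ¬ P.Rmat px py s1 ∧ ¬ P.Rmat px py r2 ∧ ¬ P.Rmat px py s2 ∧
      r1 ≠ py ∧ s1 ≠ py ∧ r2 ≠ py ∧ s2 ≠ py ∧
      ¬ P.Rmat px r1 r2 ∧ r1 ≠ r2 := by
  set l0 := P.lineThru hxy with hl0
  have hpx0 : P.incid px l0 := P.lineThru_left hxy
  have hpy0 : P.incid py l0 := P.lineThru_right hxy
  constructor
  · obtain ⟨t0, h1, h2, h3⟩ := P.third_point l0 px py
    exact ⟨t0, hxy, Ne.symm h1, Ne.symm h2, l0, hpx0, hpy0, h3⟩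
  · -- two lines m1 ≠ m2 through px, both ≠ l0
    obtain ⟨a, b, c, hab, hac, hbc, hA, hB, hC⟩ := P.three_thru px
    obtain ⟨m1, m2, hm12, hm1, hm2, hm1l0, hm2l0⟩ :
        ∃ m1 m2, m1 ≠ m2 ∧ P.incid px m1 ∧ P.incid px m2 ∧ m1 ≠ l0 ∧ m2 ≠ l0 := by
      by_cases h : a = l0
      · exact ⟨b, c, hbc, hB, hC, fun hb' => hab (h.trans hb'.symm),
          fun hc' => hac (h.trans hc'.symm)⟩
      · by_cases h' : b = l0
        · exact ⟨a, c, hac, hA, hC, h, fun hc' => hbc (h'.trans hc'.symm)⟩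
        · exact ⟨a, b, hab, hA, hB, h, h'⟩
    -- two further points on a line through px, off l0
    have key : ∀ m, P.incid px m → m ≠ l0 →
        ∃ r s, r ≠ s ∧ r ≠ px ∧ s ≠ px ∧ P.incid r m ∧ P.incid s m ∧
          ¬ P.incid r l0 ∧ ¬ P.incid s l0 := by
      intro m hpm hml0
      obtain ⟨x, y, z, hxy', hxz, hyz, hx, hy, hz⟩ := P.three_on_line m
      have off : ∀ w, P.incid w m → w ≠ px → ¬ P.incid w l0 := by
        intro w hwm hwpx hwl0
        exact hwpx (P.point_unique hml0 hwm hwl0 hpm hpx0)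
      by_cases h1 : x = px
      · exact ⟨y, z, hyz, fun h => hxy' (h1.trans h.symm),
          fun h => hxz (h1.trans h.symm), hy, hz,
          off y hy (fun h => hxy' (h1.trans h.symm)),
          off z hz (fun h => hxz (h1.trans h.symm))⟩
      · by_cases h2 : y = px
        · exact ⟨x, z, hxz, h1, fun h => hyz (h2.trans h.symm), hx, hz,
            off x hx h1, off z hz (fun h => hyz (h2.trans h.symm))⟩
        · exact ⟨x, y, hxy', h1, h2, hx, hy, off x hx h1, off y hy h2⟩
    obtain ⟨r1, s1, hrs1, hr1px, hs1px, hr1m, hs1m, hr1off, hs1off⟩ := key m1 hm1 hm1l0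
    obtain ⟨r2, s2, hrs2, hr2px, hs2px, hr2m, hs2m, hr2off, hs2off⟩ := key m2 hm2 hm2l0
    have noton : ∀ w, ¬ P.incid w l0 → ¬ P.Rmat px py w := by
      rintro w hw ⟨-, -, -, l, hl1, hl2, hl3⟩
      rw [P.line_unique hxy hl1 hl2 hpx0 hpy0] at hl3
      exact hw hl3
    have nept : ∀ w, ¬ P.incid w l0 → w ≠ py := by
      rintro w hw rfl; exact hw hpy0
    refine ⟨r1, s1, r2, s2,
      ⟨Ne.symm hr1px, Ne.symm hs1px, hrs1, m1, hm1, hr1m, hs1m⟩,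
      ⟨Ne.symm hr2px, Ne.symm hs2px, hrs2, m2, hm2, hr2m, hs2m⟩,
      noton _ hr1off, noton _ hs1off, noton _ hr2off, noton _ hs2off,
      nept _ hr1off, nept _ hs1off, nept _ hr2off, nept _ hs2off, ?_, ?_⟩
    · rintro ⟨-, -, -, l, hl1, hl2, hl3⟩
      have : l = m1 := P.line_unique (Ne.symm hr1px) hl1 hl2 hm1 hr1m
      rw [this] at hl3
      exact hr2px (P.point_unique hm12 hl3 hr2m hm1 hm2)
    · rintro rfl
      exact hr2px (P.point_unique hm12 hr1m hr2m hm1 hm2)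
  
end ProjPlane
end Plane3

namespace ProjPlane
lemma Rmat_third (P : ProjPlane) {p q : P.Point} (h : p ≠ q) : ∃ r, P.Rmat p q r := by
  obtain ⟨r, h1, h2, h3⟩ := P.third_point (P.lineThru h) p q
  exact ⟨r, h, Ne.symm h1, Ne.symm h2, P.lineThru h, P.lineThru_left h, P.lineThru_right h, h3⟩
end ProjPlane
section Amalgam

set_option linter.unusedSectionVars false

namespace Amalg

open Classical in
/-- the map from `V2` into the pushout `V1 ⊕ V2`. -/
noncomputable def g2f {V0 V1 V2 : Type} (M0 : WM V0) (f1 : V0 → V1) (f2 : V0 → V2) :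
    V2 → V1 ⊕ V2 := fun x =>
  if h : ∃ z, z ∈ M0.carrier ∧ f2 z = x then Sum.inl (f1 h.choose) else Sum.inr x

variable {V0 V1 V2 : Type} (M0 : WM V0) (M1 : WM V1) (M2 : WM V2) (f1 : V0 → V1) (f2 : V0 → V2)

def carrier3 : Set (V1 ⊕ V2) :=
  (Sum.inl '' M1.carrier) ∪ (g2f M0 f1 f2 '' M2.carrier)

def c0W : Set (V1 ⊕ V2) := Sum.inl '' (f1 '' M0.carrier)

def gL (u v : V0) : Set (V1 ⊕ V2) :=
  (Sum.inl '' (lineOf M1.R (f1 u) (f1 v) ∩ M1.carrier)) ∪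
  (g2f M0 f1 f2 '' (lineOf M2.R (f2 u) (f2 v) ∩ M2.carrier))

def R3 : (V1 ⊕ V2) → (V1 ⊕ V2) → (V1 ⊕ V2) → Prop := fun a b c =>
  (a ≠ b ∧ a ≠ c ∧ b ≠ c) ∧
  ((∃ x y z, x ∈ M1.carrier ∧ y ∈ M1.carrier ∧ z ∈ M1.carrier ∧
      a = Sum.inl x ∧ b = Sum.inl y ∧ c = Sum.inl z ∧ M1.R x y z) ∨
   (∃ x y z, x ∈ M2.carrier ∧ y ∈ M2.carrier ∧ z ∈ M2.carrier ∧
      a = g2f M0 f1 f2 x ∧ b = g2f M0 f1 f2 y ∧ c = g2f M0 f1 f2 z ∧ M2.R x y z) ∨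
   (∃ u v, u ∈ M0.carrier ∧ v ∈ M0.carrier ∧ u ≠ v ∧
      a ∈ gL M0 M1 M2 f1 f2 u v ∧ b ∈ gL M0 M1 M2 f1 f2 u v ∧ c ∈ gL M0 M1 M2 f1 f2 u v))

def Good (S : Set (V1 ⊕ V2)) : Prop :=
  (∃ p q, p ∈ M1.carrier ∧ q ∈ M1.carrier ∧ p ≠ q ∧
     S = Sum.inl '' (lineOf M1.R p q ∩ M1.carrier) ∧
     ¬ ∃ u v, u ∈ M0.carrier ∧ v ∈ M0.carrier ∧ u ≠ v ∧
        f1 u ∈ lineOf M1.R p q ∧ f1 v ∈ lineOf M1.R p q) ∨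
  (∃ p q, p ∈ M2.carrier ∧ q ∈ M2.carrier ∧ p ≠ q ∧
     S = g2f M0 f1 f2 '' (lineOf M2.R p q ∩ M2.carrier) ∧
     ¬ ∃ u v, u ∈ M0.carrier ∧ v ∈ M0.carrier ∧ u ≠ v ∧
        f2 u ∈ lineOf M2.R p q ∧ f2 v ∈ lineOf M2.R p q) ∨
  (∃ u v, u ∈ M0.carrier ∧ v ∈ M0.carrier ∧ u ≠ v ∧ S = gL M0 M1 M2 f1 f2 u v)

variable {M0 M1 M2 f1 f2}
variable (hf1 : IsEmb M0 M1 f1) (hf2 : IsEmb M0 M2 f2)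

section Basic
include hf2 in
lemma g2f_base {z : V0} (hz : z ∈ M0.carrier) : g2f M0 f1 f2 (f2 z) = Sum.inl (f1 z) := by
  rw [g2f, dif_pos ⟨z, hz, rfl⟩]
  congr 1
  have h := (⟨z, hz, rfl⟩ : ∃ w, w ∈ M0.carrier ∧ f2 w = f2 z)
  have hs := h.choose_spec
  exact congrArg f1 (hf2.inj _ hs.1 _ hz hs.2)

lemma g2f_eq_inl {x : V2} {t : V1} (h : g2f M0 f1 f2 x = Sum.inl t) :
    ∃ z, z ∈ M0.carrier ∧ f2 z = x ∧ f1 z = t := by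
  by_cases hx : ∃ z, z ∈ M0.carrier ∧ f2 z = x
  · rw [g2f, dif_pos hx] at h
    exact ⟨hx.choose, hx.choose_spec.1, hx.choose_spec.2, (Sum.inl.inj h)⟩
  · rw [g2f, dif_neg hx] at h; exact absurd h (by simp)

include hf1 in
lemma g2f_inj : Function.Injective (g2f M0 f1 f2) := by
  intro x y h
  unfold g2f at h
  by_cases hx : ∃ z, z ∈ M0.carrier ∧ f2 z = x <;>
    by_cases hy : ∃ z, z ∈ M0.carrier ∧ f2 z = y
  · rw [dif_pos hx, dif_pos hy] at h
    have := hf1.inj _ hx.choose_spec.1 _ hy.choose_spec.1 (Sum.inl.inj h)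
    rw [← hx.choose_spec.2, ← hy.choose_spec.2, this]
  · rw [dif_pos hx, dif_neg hy] at h; exact absurd h (by simp)
  · rw [dif_neg hx, dif_pos hy] at h; exact absurd h (by simp)
  · rw [dif_neg hx, dif_neg hy] at h; exact Sum.inr.inj h

end Basic
section Transport

include hf1 in
lemma f1_ne {u v : V0} (hu : u ∈ M0.carrier) (hv : v ∈ M0.carrier) (h : u ≠ v) :
    f1 u ≠ f1 v := fun he => h (hf1.inj _ hu _ hv he)

include hf2 in
lemma f2_ne {u v : V0} (hu : u ∈ M0.carrier) (hv : v ∈ M0.carrier) (h : u ≠ v) :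
    f2 u ≠ f2 v := fun he => h (hf2.inj _ hu _ hv he)

include hf1 in
lemma map_line1 {u v w : V0} (hu : u ∈ M0.carrier) (hv : v ∈ M0.carrier)
    (hw : w ∈ M0.carrier) :
    w ∈ lineOf M0.R u v ↔ f1 w ∈ lineOf M1.R (f1 u) (f1 v) := by
  simp only [mem_lineOf]
  constructor
  · rintro (rfl | rfl | h)
    · exact Or.inl rfl
    · exact Or.inr (Or.inl rfl)
    · exact Or.inr (Or.inr ((hf1.rel _ hu _ hv _ hw).1 h))
  · rintro (h | h | h)
    · exact Or.inl (hf1.inj _ hw _ hu h)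
    · exact Or.inr (Or.inl (hf1.inj _ hw _ hv h))
    · exact Or.inr (Or.inr ((hf1.rel _ hu _ hv _ hw).2 h))

include hf2 in
lemma map_line2 {u v w : V0} (hu : u ∈ M0.carrier) (hv : v ∈ M0.carrier)
    (hw : w ∈ M0.carrier) :
    w ∈ lineOf M0.R u v ↔ f2 w ∈ lineOf M2.R (f2 u) (f2 v) := by
  simp only [mem_lineOf]
  constructor
  · rintro (rfl | rfl | h)
    · exact Or.inl rfl
    · exact Or.inr (Or.inl rfl)
    · exact Or.inr (Or.inr ((hf2.rel _ hu _ hv _ hw).1 h))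
  · rintro (h | h | h)
    · exact Or.inl (hf2.inj _ hw _ hu h)
    · exact Or.inr (Or.inl (hf2.inj _ hw _ hv h))
    · exact Or.inr (Or.inr ((hf2.rel _ hu _ hv _ hw).2 h))

lemma gL_sub_carrier (u v : V0) : gL M0 M1 M2 f1 f2 u v ⊆ carrier3 M0 M1 M2 f1 f2 := by
  rintro x (⟨t, ⟨-, ht⟩, rfl⟩ | ⟨m, ⟨-, hm⟩, rfl⟩)
  · exact Or.inl ⟨t, ht, rfl⟩
  · exact Or.inr ⟨m, hm, rfl⟩

include hf1 hf2 in
lemma mem_gL_inl {u v : V0} (hu : u ∈ M0.carrier) (hv : v ∈ M0.carrier) {t : V1}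
    (h : Sum.inl t ∈ gL M0 M1 M2 f1 f2 u v) :
    t ∈ lineOf M1.R (f1 u) (f1 v) ∧ t ∈ M1.carrier := by
  rcases h with ⟨t', ⟨hline, hmem⟩, he⟩ | ⟨m, ⟨hline, hmem⟩, he⟩
  · obtain rfl := Sum.inl.inj he
    exact ⟨hline, hmem⟩
  · obtain ⟨z, hz, hfz, hft⟩ := g2f_eq_inl he
    have : z ∈ lineOf M0.R u v := (map_line2 hf2 hu hv hz).2 (hfz ▸ hline)
    exact ⟨hft ▸ (map_line1 hf1 hu hv hz).1 this, hft ▸ hf1.maps _ hz⟩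

include hf1 hf2 in
lemma mem_gL_g2 {u v : V0} (hu : u ∈ M0.carrier) (hv : v ∈ M0.carrier) {m : V2}
    (hm : m ∈ M2.carrier) (h : g2f M0 f1 f2 m ∈ gL M0 M1 M2 f1 f2 u v) :
    m ∈ lineOf M2.R (f2 u) (f2 v) := by
  rcases h with ⟨t, ⟨hline, hmem⟩, he⟩ | ⟨m', ⟨hline, hmem⟩, he⟩
  · obtain ⟨z, hz, hfz, hft⟩ := g2f_eq_inl he.symm
    have : z ∈ lineOf M0.R u v := (map_line1 hf1 hu hv hz).2 (hft ▸ hline)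
    exact hfz ▸ (map_line2 hf2 hu hv hz).1 this
  · rwa [g2f_inj hf1 he] at hline

include hf1 hf2 in
lemma gL_congr {u v u' v' : V0} (hu : u ∈ M0.carrier) (hv : v ∈ M0.carrier)
    (hu' : u' ∈ M0.carrier) (hv' : v' ∈ M0.carrier) (huv : u ≠ v) (hu'v' : u' ≠ v')
    (h1 : u' ∈ lineOf M0.R u v) (h2 : v' ∈ lineOf M0.R u v) :
    gL M0 M1 M2 f1 f2 u' v' = gL M0 M1 M2 f1 f2 u v := by
  have e1 : lineOf M1.R (f1 u') (f1 v') = lineOf M1.R (f1 u) (f1 v) :=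
    M1.line_eq (f1_ne hf1 hu hv huv) ((map_line1 hf1 hu hv hu').1 h1)
      ((map_line1 hf1 hu hv hv').1 h2) (f1_ne hf1 hu' hv' hu'v')
  have e2 : lineOf M2.R (f2 u') (f2 v') = lineOf M2.R (f2 u) (f2 v) :=
    M2.line_eq (f2_ne hf2 hu hv huv) ((map_line2 hf2 hu hv hu').1 h1)
      ((map_line2 hf2 hu hv hv').1 h2) (f2_ne hf2 hu' hv' hu'v')
  rw [gL, gL, e1, e2]

include hf1 hf2 in
lemma mem_gL_of_line0 {u v w : V0} (hu : u ∈ M0.carrier) (hv : v ∈ M0.carrier)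
    (hw : w ∈ M0.carrier) (h : w ∈ lineOf M0.R u v) :
    Sum.inl (f1 w) ∈ gL M0 M1 M2 f1 f2 u v :=
  Or.inl ⟨f1 w, ⟨(map_line1 hf1 hu hv hw).1 h, hf1.maps _ hw⟩, rfl⟩

include hf1 in
lemma base_mem_gL_left {u v : V0} (hu : u ∈ M0.carrier) :
    Sum.inl (f1 u) ∈ gL M0 M1 M2 f1 f2 u v :=
  Or.inl ⟨f1 u, ⟨lineOf_left _ _, hf1.maps _ hu⟩, rfl⟩

include hf1 in
lemma base_mem_gL_right {u v : V0} (hv : v ∈ M0.carrier) :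
    Sum.inl (f1 v) ∈ gL M0 M1 M2 f1 f2 u v :=
  Or.inl ⟨f1 v, ⟨lineOf_right _ _, hf1.maps _ hv⟩, rfl⟩

end Transport

section CommonPoint

include hf1 in
lemma common_pt_M1 {u v u' v' : V0} (hu : u ∈ M0.carrier) (hv : v ∈ M0.carrier)
    (hu' : u' ∈ M0.carrier) (hv' : v' ∈ M0.carrier) (huv : u ≠ v) (hu'v' : u' ≠ v')
    (hL0 : lineOf M0.R u v ≠ lineOf M0.R u' v') {t : V1} (ht : t ∈ M1.carrier)
    (h1 : t ∈ lineOf M1.R (f1 u) (f1 v)) (h2 : t ∈ lineOf M1.R (f1 u') (f1 v')) :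
    ∃ w, w ∈ M0.carrier ∧ t = f1 w ∧ w ∈ lineOf M0.R u v ∧ w ∈ lineOf M0.R u' v' := by
  have hne1 : f1 u ≠ f1 v := f1_ne hf1 hu hv huv
  have hne2 : f1 u' ≠ f1 v' := f1_ne hf1 hu' hv' hu'v'
  have hL1 : lineOf M1.R (f1 u) (f1 v) ≠ lineOf M1.R (f1 u') (f1 v') := by
    intro he
    apply hL0
    refine (M0.line_eq huv ?_ ?_ hu'v').symm
    · exact (map_line1 hf1 hu hv hu').2 (by rw [he]; exact lineOf_left _ _)
    · exact (map_line1 hf1 hu hv hv').2 (by rw [he]; exact lineOf_right _ _)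
  have hmu := hf1.maps _ hu
  have hmv := hf1.maps _ hv
  have hmu' := hf1.maps _ hu'
  have hmv' := hf1.maps _ hv'
  have hback : ∀ w, w ∈ M0.carrier → f1 w ∈ lineOf M1.R (f1 u) (f1 v) →
      f1 w ∈ lineOf M1.R (f1 u') (f1 v') →
      ∃ w', w' ∈ M0.carrier ∧ f1 w = f1 w' ∧ w' ∈ lineOf M0.R u v ∧
        w' ∈ lineOf M0.R u' v' := by
    intro w hw hw1 hw2
    exact ⟨w, hw, rfl, (map_line1 hf1 hu hv hw).2 hw1, (map_line1 hf1 hu' hv' hw).2 hw2⟩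
  rcases M1.wedge_det (f1 u) (f1 v) (f1 u') (f1 v') hmu hmv hmu' hmv' with
    ⟨-, -, hld, hw1, hw2, -⟩ | ⟨-, hnone⟩
  · have hwe : M1.wedge (f1 u) (f1 v) (f1 u') (f1 v') = f1 (M0.wedge u v u' v') :=
      (hf1.wedge _ hu _ hv _ hu' _ hv').symm
    have hw0 : M0.wedge u v u' v' ∈ M0.carrier := M0.wedge_mem _ _ _ _ hu hv hu' hv'
    by_cases hte : t = M1.wedge (f1 u) (f1 v) (f1 u') (f1 v')
    · obtain ⟨w', hw', he, l1, l2⟩ := hback _ hw0 (hwe ▸ hw1) (hwe ▸ hw2)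
      exact ⟨w', hw', by rw [hte, hwe, he], l1, l2⟩
    · exact absurd (M1.uniq_inter hne1 hne2 h1 h2 hw1 hw2 hte) hld
  · rcases mem_lineOf.1 h1 with rfl | rfl | hR1
    · obtain ⟨w', hw', he, l1, l2⟩ := hback _ hu h1 h2
      exact ⟨w', hw', he, l1, l2⟩
    · obtain ⟨w', hw', he, l1, l2⟩ := hback _ hv h1 h2
      exact ⟨w', hw', he, l1, l2⟩
    · rcases mem_lineOf.1 h2 with rfl | rfl | hR2
      · obtain ⟨w', hw', he, l1, l2⟩ := hback _ hu' h1 h2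
        exact ⟨w', hw', he, l1, l2⟩
      · obtain ⟨w', hw', he, l1, l2⟩ := hback _ hv' h1 h2
        exact ⟨w', hw', he, l1, l2⟩
      · exfalso
        refine hnone ⟨t, hne1, hne2, hL1, h1, h2, ?_⟩
        simp only [Set.mem_insert_iff, Set.mem_singleton_iff]
        push_neg
        exact ⟨(M1.irrefl _ _ _ hR1).2.1.symm,
          (M1.irrefl _ _ _ hR1).2.2.symm,
          (M1.irrefl _ _ _ hR2).2.1.symm,
          (M1.irrefl _ _ _ hR2).2.2.symm⟩

include hf2 in
lemma common_pt_M2 {u v u' v' : V0} (hu : u ∈ M0.carrier) (hv : v ∈ M0.carrier)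
    (hu' : u' ∈ M0.carrier) (hv' : v' ∈ M0.carrier) (huv : u ≠ v) (hu'v' : u' ≠ v')
    (hL0 : lineOf M0.R u v ≠ lineOf M0.R u' v') {t : V2} (ht : t ∈ M2.carrier)
    (h1 : t ∈ lineOf M2.R (f2 u) (f2 v)) (h2 : t ∈ lineOf M2.R (f2 u') (f2 v')) :
    ∃ w, w ∈ M0.carrier ∧ t = f2 w ∧ w ∈ lineOf M0.R u v ∧ w ∈ lineOf M0.R u' v' := by
  have hne1 : f2 u ≠ f2 v := f2_ne hf2 hu hv huv
  have hne2 : f2 u' ≠ f2 v' := f2_ne hf2 hu' hv' hu'v'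
  have hL1 : lineOf M2.R (f2 u) (f2 v) ≠ lineOf M2.R (f2 u') (f2 v') := by
    intro he
    apply hL0
    refine (M0.line_eq huv ?_ ?_ hu'v').symm
    · exact (map_line2 hf2 hu hv hu').2 (by rw [he]; exact lineOf_left _ _)
    · exact (map_line2 hf2 hu hv hv').2 (by rw [he]; exact lineOf_right _ _)
  have hmu := hf2.maps _ hu
  have hmv := hf2.maps _ hv
  have hmu' := hf2.maps _ hu'
  have hmv' := hf2.maps _ hv'
  have hback : ∀ w, w ∈ M0.carrier → f2 w ∈ lineOf M2.R (f2 u) (f2 v) →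
      f2 w ∈ lineOf M2.R (f2 u') (f2 v') →
      ∃ w', w' ∈ M0.carrier ∧ f2 w = f2 w' ∧ w' ∈ lineOf M0.R u v ∧
        w' ∈ lineOf M0.R u' v' := by
    intro w hw hw1 hw2
    exact ⟨w, hw, rfl, (map_line2 hf2 hu hv hw).2 hw1, (map_line2 hf2 hu' hv' hw).2 hw2⟩
  rcases M2.wedge_det (f2 u) (f2 v) (f2 u') (f2 v') hmu hmv hmu' hmv' with
    ⟨-, -, hld, hw1, hw2, -⟩ | ⟨-, hnone⟩
  · have hwe : M2.wedge (f2 u) (f2 v) (f2 u') (f2 v') = f2 (M0.wedge u v u' v') :=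
      (hf2.wedge _ hu _ hv _ hu' _ hv').symm
    have hw0 : M0.wedge u v u' v' ∈ M0.carrier := M0.wedge_mem _ _ _ _ hu hv hu' hv'
    by_cases hte : t = M2.wedge (f2 u) (f2 v) (f2 u') (f2 v')
    · obtain ⟨w', hw', he, l1, l2⟩ := hback _ hw0 (hwe ▸ hw1) (hwe ▸ hw2)
      exact ⟨w', hw', by rw [hte, hwe, he], l1, l2⟩
    · exact absurd (M2.uniq_inter hne1 hne2 h1 h2 hw1 hw2 hte) hld
  · rcases mem_lineOf.1 h1 with rfl | rfl | hR1
    · obtain ⟨w', hw', he, l1, l2⟩ := hback _ hu h1 h2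
      exact ⟨w', hw', he, l1, l2⟩
    · obtain ⟨w', hw', he, l1, l2⟩ := hback _ hv h1 h2
      exact ⟨w', hw', he, l1, l2⟩
    · rcases mem_lineOf.1 h2 with rfl | rfl | hR2
      · obtain ⟨w', hw', he, l1, l2⟩ := hback _ hu' h1 h2
        exact ⟨w', hw', he, l1, l2⟩
      · obtain ⟨w', hw', he, l1, l2⟩ := hback _ hv' h1 h2
        exact ⟨w', hw', he, l1, l2⟩
      · exfalso
        refine hnone ⟨t, hne1, hne2, hL1, h1, h2, ?_⟩
        simp only [Set.mem_insert_iff, Set.mem_singleton_iff]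
        push_neg
        exact ⟨(M2.irrefl _ _ _ hR1).2.1.symm,
          (M2.irrefl _ _ _ hR1).2.2.symm,
          (M2.irrefl _ _ _ hR2).2.1.symm,
          (M2.irrefl _ _ _ hR2).2.2.symm⟩

end CommonPoint

section GoodLines

lemma mem_gL_inr {u v : V0} {s : V2} (h : Sum.inr s ∈ gL M0 M1 M2 f1 f2 u v) :
    s ∈ lineOf M2.R (f2 u) (f2 v) ∧ s ∈ M2.carrier ∧ g2f M0 f1 f2 s = Sum.inr s := by
  rcases h with ⟨t, -, he⟩ | ⟨m, ⟨hline, hmem⟩, he⟩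
  · exact absurd he (by simp)
  · by_cases hm : ∃ z, z ∈ M0.carrier ∧ f2 z = m
    · rw [g2f, dif_pos hm] at he; exact absurd he (by simp)
    · rw [g2f, dif_neg hm] at he
      obtain rfl := Sum.inr.inj he
      exact ⟨hline, hmem, by rw [g2f, dif_neg hm]⟩

lemma Good_sub {S : Set (V1 ⊕ V2)} (h : Good M0 M1 M2 f1 f2 S) :
    S ⊆ carrier3 M0 M1 M2 f1 f2 := by
  rcases h with ⟨p, q, -, -, -, rfl, -⟩ | ⟨p, q, -, -, -, rfl, -⟩ | ⟨u, v, -, -, -, rfl⟩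
  · rintro x ⟨t, ⟨-, ht⟩, rfl⟩; exact Or.inl ⟨t, ht, rfl⟩
  · rintro x ⟨m, ⟨-, hm⟩, rfl⟩; exact Or.inr ⟨m, hm, rfl⟩
  · exact gL_sub_carrier _ _

lemma GoodTriple {S : Set (V1 ⊕ V2)} (h : Good M0 M1 M2 f1 f2 S) {x y z : V1 ⊕ V2}
    (hx : x ∈ S) (hy : y ∈ S) (hz : z ∈ S)
    (hxy : x ≠ y) (hxz : x ≠ z) (hyz : y ≠ z) : R3 M0 M1 M2 f1 f2 x y z := by
  refine ⟨⟨hxy, hxz, hyz⟩, ?_⟩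
  rcases h with ⟨p, q, -, -, hpq, rfl, -⟩ | ⟨p, q, -, -, hpq, rfl, -⟩ | ⟨u, v, hu, hv, huv, rfl⟩
  · obtain ⟨a, ⟨hal, hac⟩, rfl⟩ := hx
    obtain ⟨b, ⟨hbl, hbc⟩, rfl⟩ := hy
    obtain ⟨c, ⟨hcl, hcc⟩, rfl⟩ := hz
    have hab : a ≠ b := fun he => hxy (congrArg _ he)
    have hac' : a ≠ c := fun he => hxz (congrArg _ he)
    have hbc' : b ≠ c := fun he => hyz (congrArg _ he)
    exact Or.inl ⟨a, b, c, hac, hbc, hcc, rfl, rfl, rfl, M1.coll3 hpq hal hbl hcl hab hac' hbc'⟩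
  · obtain ⟨a, ⟨hal, hac⟩, rfl⟩ := hx
    obtain ⟨b, ⟨hbl, hbc⟩, rfl⟩ := hy
    obtain ⟨c, ⟨hcl, hcc⟩, rfl⟩ := hz
    have hab : a ≠ b := fun he => hxy (congrArg _ he)
    have hac' : a ≠ c := fun he => hxz (congrArg _ he)
    have hbc' : b ≠ c := fun he => hyz (congrArg _ he)
    exact Or.inr (Or.inl ⟨a, b, c, hac, hbc, hcc, rfl, rfl, rfl,
      M2.coll3 hpq hal hbl hcl hab hac' hbc'⟩)
  · exact Or.inr (Or.inr ⟨u, v, hu, hv, huv, hx, hy, hz⟩)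

include hf1 hf2 in
lemma R3_good {a b c : V1 ⊕ V2} (h : R3 M0 M1 M2 f1 f2 a b c) :
    ∃ S, Good M0 M1 M2 f1 f2 S ∧ a ∈ S ∧ b ∈ S ∧ c ∈ S := by
  obtain ⟨⟨hab, -, -⟩, h⟩ := h
  rcases h with ⟨x, y, z, hx, hy, hz, rfl, rfl, rfl, hR⟩ |
    ⟨x, y, z, hx, hy, hz, rfl, rfl, rfl, hR⟩ |
    ⟨u, v, hu, hv, huv, ha, hb, hc⟩
  · have hxy : x ≠ y := fun he => hab (congrArg _ he)
    have hxl : x ∈ lineOf M1.R x y := lineOf_left _ _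
    have hyl : y ∈ lineOf M1.R x y := lineOf_right _ _
    have hzl : z ∈ lineOf M1.R x y := mem_lineOf.2 (Or.inr (Or.inr hR))
    by_cases hex : ∃ u v, u ∈ M0.carrier ∧ v ∈ M0.carrier ∧ u ≠ v ∧
        f1 u ∈ lineOf M1.R x y ∧ f1 v ∈ lineOf M1.R x y
    · obtain ⟨u, v, hu, hv, huv, h1, h2⟩ := hex
      have hle : lineOf M1.R (f1 u) (f1 v) = lineOf M1.R x y :=
        M1.line_eq hxy h1 h2 (f1_ne hf1 hu hv huv)
      refine ⟨gL M0 M1 M2 f1 f2 u v, Or.inr (Or.inr ⟨u, v, hu, hv, huv, rfl⟩), ?_, ?_, ?_⟩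
      · exact Or.inl ⟨x, ⟨hle.symm ▸ hxl, hx⟩, rfl⟩
      · exact Or.inl ⟨y, ⟨hle.symm ▸ hyl, hy⟩, rfl⟩
      · exact Or.inl ⟨z, ⟨hle.symm ▸ hzl, hz⟩, rfl⟩
    · exact ⟨Sum.inl '' (lineOf M1.R x y ∩ M1.carrier),
        Or.inl ⟨x, y, hx, hy, hxy, rfl, hex⟩,
        ⟨x, ⟨hxl, hx⟩, rfl⟩, ⟨y, ⟨hyl, hy⟩, rfl⟩, ⟨z, ⟨hzl, hz⟩, rfl⟩⟩
  · have hxy : x ≠ y := fun he => hab (congrArg _ he)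
    have hxl : x ∈ lineOf M2.R x y := lineOf_left _ _
    have hyl : y ∈ lineOf M2.R x y := lineOf_right _ _
    have hzl : z ∈ lineOf M2.R x y := mem_lineOf.2 (Or.inr (Or.inr hR))
    by_cases hex : ∃ u v, u ∈ M0.carrier ∧ v ∈ M0.carrier ∧ u ≠ v ∧
        f2 u ∈ lineOf M2.R x y ∧ f2 v ∈ lineOf M2.R x y
    · obtain ⟨u, v, hu, hv, huv, h1, h2⟩ := hex
      have hle : lineOf M2.R (f2 u) (f2 v) = lineOf M2.R x y :=
        M2.line_eq hxy h1 h2 (f2_ne hf2 hu hv huv)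
      refine ⟨gL M0 M1 M2 f1 f2 u v, Or.inr (Or.inr ⟨u, v, hu, hv, huv, rfl⟩), ?_, ?_, ?_⟩
      · exact Or.inr ⟨x, ⟨hle.symm ▸ hxl, hx⟩, rfl⟩
      · exact Or.inr ⟨y, ⟨hle.symm ▸ hyl, hy⟩, rfl⟩
      · exact Or.inr ⟨z, ⟨hle.symm ▸ hzl, hz⟩, rfl⟩
    · exact ⟨g2f M0 f1 f2 '' (lineOf M2.R x y ∩ M2.carrier),
        Or.inr (Or.inl ⟨x, y, hx, hy, hxy, rfl, hex⟩),
        ⟨x, ⟨hxl, hx⟩, rfl⟩, ⟨y, ⟨hyl, hy⟩, rfl⟩, ⟨z, ⟨hzl, hz⟩, rfl⟩⟩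
  · exact ⟨gL M0 M1 M2 f1 f2 u v, Or.inr (Or.inr ⟨u, v, hu, hv, huv, rfl⟩), ha, hb, hc⟩

end GoodLines

section GoodUniq

include hf1 hf2 in
lemma helper12 {p q : V1} {p' q' : V2} (hpq : p ≠ q)
    (hpure : ¬ ∃ u v, u ∈ M0.carrier ∧ v ∈ M0.carrier ∧ u ≠ v ∧
        f1 u ∈ lineOf M1.R p q ∧ f1 v ∈ lineOf M1.R p q)
    {x y : V1 ⊕ V2} (hxy : x ≠ y)
    (hx : x ∈ Sum.inl '' (lineOf M1.R p q ∩ M1.carrier))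
    (hy : y ∈ Sum.inl '' (lineOf M1.R p q ∩ M1.carrier))
    (hx' : x ∈ g2f M0 f1 f2 '' (lineOf M2.R p' q' ∩ M2.carrier))
    (hy' : y ∈ g2f M0 f1 f2 '' (lineOf M2.R p' q' ∩ M2.carrier)) : False := by
  obtain ⟨a, ⟨hal, -⟩, rfl⟩ := hx
  obtain ⟨b, ⟨hbl, -⟩, rfl⟩ := hy
  obtain ⟨m, -, hem⟩ := hx'
  obtain ⟨m', -, hem'⟩ := hy'
  obtain ⟨zx, hzx, -, hfx⟩ := g2f_eq_inl hem
  obtain ⟨zy, hzy, -, hfy⟩ := g2f_eq_inl hem'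
  refine hpure ⟨zx, zy, hzx, hzy, ?_, hfx.symm ▸ hal, hfy.symm ▸ hbl⟩
  rintro rfl
  exact hxy (congrArg Sum.inl (hfx.symm.trans hfy))

include hf1 hf2 in
lemma helper13 {p q : V1} {u v : V0} (hpq : p ≠ q)
    (hu : u ∈ M0.carrier) (hv : v ∈ M0.carrier)
    (hpure : ¬ ∃ u' v', u' ∈ M0.carrier ∧ v' ∈ M0.carrier ∧ u' ≠ v' ∧
        f1 u' ∈ lineOf M1.R p q ∧ f1 v' ∈ lineOf M1.R p q)
    (huv : u ≠ v) {x y : V1 ⊕ V2} (hxy : x ≠ y)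
    (hx : x ∈ Sum.inl '' (lineOf M1.R p q ∩ M1.carrier))
    (hy : y ∈ Sum.inl '' (lineOf M1.R p q ∩ M1.carrier))
    (hx' : x ∈ gL M0 M1 M2 f1 f2 u v) (hy' : y ∈ gL M0 M1 M2 f1 f2 u v) : False := by
  obtain ⟨a, ⟨hal, hac⟩, rfl⟩ := hx
  obtain ⟨b, ⟨hbl, hbc⟩, rfl⟩ := hy
  have hab : a ≠ b := fun he => hxy (congrArg _ he)
  obtain ⟨hal', -⟩ := mem_gL_inl hf1 hf2 hu hv hx'
  obtain ⟨hbl', -⟩ := mem_gL_inl hf1 hf2 hu hv hy'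
  have he : lineOf M1.R (f1 u) (f1 v) = lineOf M1.R p q :=
    M1.uniq_inter (f1_ne hf1 hu hv huv) hpq hal' hal hbl' hbl hab
  exact hpure ⟨u, v, hu, hv, huv, he ▸ lineOf_left _ _, he ▸ lineOf_right _ _⟩

include hf1 hf2 in
lemma helper23 {p q : V2} {u v : V0} (hpq : p ≠ q)
    (hu : u ∈ M0.carrier) (hv : v ∈ M0.carrier)
    (hpure : ¬ ∃ u' v', u' ∈ M0.carrier ∧ v' ∈ M0.carrier ∧ u' ≠ v' ∧
        f2 u' ∈ lineOf M2.R p q ∧ f2 v' ∈ lineOf M2.R p q)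
    (huv : u ≠ v) {x y : V1 ⊕ V2} (hxy : x ≠ y)
    (hx : x ∈ g2f M0 f1 f2 '' (lineOf M2.R p q ∩ M2.carrier))
    (hy : y ∈ g2f M0 f1 f2 '' (lineOf M2.R p q ∩ M2.carrier))
    (hx' : x ∈ gL M0 M1 M2 f1 f2 u v) (hy' : y ∈ gL M0 M1 M2 f1 f2 u v) : False := by
  obtain ⟨a, ⟨hal, hac⟩, rfl⟩ := hx
  obtain ⟨b, ⟨hbl, hbc⟩, rfl⟩ := hy
  have hab : a ≠ b := fun he => hxy (congrArg _ he)
  have hal' := mem_gL_g2 hf1 hf2 hu hv hac hx'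
  have hbl' := mem_gL_g2 hf1 hf2 hu hv hbc hy'
  have he : lineOf M2.R (f2 u) (f2 v) = lineOf M2.R p q :=
    M2.uniq_inter (f2_ne hf2 hu hv huv) hpq hal' hal hbl' hbl hab
  exact hpure ⟨u, v, hu, hv, huv, he ▸ lineOf_left _ _, he ▸ lineOf_right _ _⟩

include hf1 hf2 in
lemma gL_eq_of_common {u v u' v' : V0}
    (hu : u ∈ M0.carrier) (hv : v ∈ M0.carrier)
    (hu' : u' ∈ M0.carrier) (hv' : v' ∈ M0.carrier)
    (huv : u ≠ v) (hu'v' : u' ≠ v') {x y : V1 ⊕ V2} (hxy : x ≠ y)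
    (hx : x ∈ gL M0 M1 M2 f1 f2 u v) (hx' : x ∈ gL M0 M1 M2 f1 f2 u' v')
    (hy : y ∈ gL M0 M1 M2 f1 f2 u v) (hy' : y ∈ gL M0 M1 M2 f1 f2 u' v') :
    gL M0 M1 M2 f1 f2 u v = gL M0 M1 M2 f1 f2 u' v' := by
  by_cases hL0 : lineOf M0.R u v = lineOf M0.R u' v'
  · refine gL_congr hf1 hf2 hu' hv' hu hv hu'v' huv ?_ ?_
    · exact hL0 ▸ lineOf_left _ _
    · exact hL0 ▸ lineOf_right _ _
  · exfalso
    -- derive that the M0-lines are equal, contradiction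
    apply hL0
    have base : ∀ m, m ∈ M2.carrier → m ∈ lineOf M2.R (f2 u) (f2 v) →
        m ∈ lineOf M2.R (f2 u') (f2 v') → m ∉ (fun z => f2 z) '' M0.carrier → False := by
      intro m hm h1 h2 hnot
      obtain ⟨w, hw, he, -, -⟩ := common_pt_M2 hf2 hu hv hu' hv' huv hu'v' hL0 hm h1 h2
      exact hnot ⟨w, hw, he.symm⟩
    have hM2eq : ∀ m m', m ∈ M2.carrier → m' ∈ M2.carrier → m ≠ m' →
        m ∈ lineOf M2.R (f2 u) (f2 v) → m ∈ lineOf M2.R (f2 u') (f2 v') →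
        m' ∈ lineOf M2.R (f2 u) (f2 v) → m' ∈ lineOf M2.R (f2 u') (f2 v') →
        lineOf M0.R u v = lineOf M0.R u' v' := by
      intro m m' hm hm' hne h1 h2 h1' h2'
      have he2 : lineOf M2.R (f2 u) (f2 v) = lineOf M2.R (f2 u') (f2 v') :=
        M2.uniq_inter (f2_ne hf2 hu hv huv) (f2_ne hf2 hu' hv' hu'v') h1 h2 h1' h2' hne
      refine M0.line_eq huv ?_ ?_ hu'v' |>.symm
      · exact (map_line2 hf2 hu hv hu').2 (he2 ▸ lineOf_left _ _)
      · exact (map_line2 hf2 hu hv hv').2 (he2 ▸ lineOf_right _ _)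
    have hM1eq : ∀ t t', t ∈ M1.carrier → t' ∈ M1.carrier → t ≠ t' →
        t ∈ lineOf M1.R (f1 u) (f1 v) → t ∈ lineOf M1.R (f1 u') (f1 v') →
        t' ∈ lineOf M1.R (f1 u) (f1 v) → t' ∈ lineOf M1.R (f1 u') (f1 v') →
        lineOf M0.R u v = lineOf M0.R u' v' := by
      intro t t' ht ht' hne h1 h2 h1' h2'
      have he1 : lineOf M1.R (f1 u) (f1 v) = lineOf M1.R (f1 u') (f1 v') :=
        M1.uniq_inter (f1_ne hf1 hu hv huv) (f1_ne hf1 hu' hv' hu'v') h1 h2 h1' h2' hne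
      refine M0.line_eq huv ?_ ?_ hu'v' |>.symm
      · exact (map_line1 hf1 hu hv hu').2 (he1 ▸ lineOf_left _ _)
      · exact (map_line1 hf1 hu hv hv').2 (he1 ▸ lineOf_right _ _)
    -- case on the shape of x and y
    match x, y with
    | Sum.inl tx, Sum.inl ty =>
      obtain ⟨hx1, hxc⟩ := mem_gL_inl hf1 hf2 hu hv hx
      obtain ⟨hx2, -⟩ := mem_gL_inl hf1 hf2 hu' hv' hx'
      obtain ⟨hy1, hyc⟩ := mem_gL_inl hf1 hf2 hu hv hy
      obtain ⟨hy2, -⟩ := mem_gL_inl hf1 hf2 hu' hv' hy'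
      exact hM1eq tx ty hxc hyc (fun he => hxy (congrArg _ he)) hx1 hx2 hy1 hy2
    | Sum.inl tx, Sum.inr sy =>
      obtain ⟨hx1, hxc⟩ := mem_gL_inl hf1 hf2 hu hv hx
      obtain ⟨hx2, -⟩ := mem_gL_inl hf1 hf2 hu' hv' hx'
      obtain ⟨hy1, hyc, hyg⟩ := mem_gL_inr hy
      obtain ⟨hy2, -, -⟩ := mem_gL_inr hy'
      obtain ⟨w, hw, he, hw1, hw2⟩ :=
        common_pt_M1 hf1 hu hv hu' hv' huv hu'v' hL0 hxc hx1 hx2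
      refine hM2eq (f2 w) sy (hf2.maps _ hw) hyc ?_
        ((map_line2 hf2 hu hv hw).1 hw1) ((map_line2 hf2 hu' hv' hw).1 hw2) hy1 hy2
      intro hef
      rw [← hef, g2f_base hf2 hw] at hyg
      exact absurd hyg (by simp)
    | Sum.inr sx, Sum.inl ty =>
      obtain ⟨hy1, hyc⟩ := mem_gL_inl hf1 hf2 hu hv hy
      obtain ⟨hy2, -⟩ := mem_gL_inl hf1 hf2 hu' hv' hy'
      obtain ⟨hx1, hxc, hxg⟩ := mem_gL_inr hx
      obtain ⟨hx2, -, -⟩ := mem_gL_inr hx'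
      obtain ⟨w, hw, he, hw1, hw2⟩ :=
        common_pt_M1 hf1 hu hv hu' hv' huv hu'v' hL0 hyc hy1 hy2
      refine hM2eq (f2 w) sx (hf2.maps _ hw) hxc ?_
        ((map_line2 hf2 hu hv hw).1 hw1) ((map_line2 hf2 hu' hv' hw).1 hw2) hx1 hx2
      intro hef
      rw [← hef, g2f_base hf2 hw] at hxg
      exact absurd hxg (by simp)
    | Sum.inr sx, Sum.inr sy =>
      obtain ⟨hx1, hxc, -⟩ := mem_gL_inr hx
      obtain ⟨hx2, -, -⟩ := mem_gL_inr hx'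
      obtain ⟨hy1, hyc, -⟩ := mem_gL_inr hy
      obtain ⟨hy2, -, -⟩ := mem_gL_inr hy'
      exact hM2eq sx sy hxc hyc (fun he => hxy (congrArg _ he)) hx1 hx2 hy1 hy2

include hf1 hf2 in
lemma GoodUniq {S S' : Set (V1 ⊕ V2)} (hS : Good M0 M1 M2 f1 f2 S)
    (hS' : Good M0 M1 M2 f1 f2 S') {x y : V1 ⊕ V2} (hxy : x ≠ y)
    (hxS : x ∈ S) (hxS' : x ∈ S') (hyS : y ∈ S) (hyS' : y ∈ S') : S = S' := by
  rcases hS with ⟨p, q, hp, hq, hpq, rfl, hpure⟩ | ⟨p, q, hp, hq, hpq, rfl, hpure⟩ |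
    ⟨u, v, hu, hv, huv, rfl⟩ <;>
    rcases hS' with ⟨p', q', hp', hq', hpq', rfl, hpure'⟩ |
      ⟨p', q', hp', hq', hpq', rfl, hpure'⟩ | ⟨u', v', hu', hv', hu'v', rfl⟩
  · -- pure1 / pure1
    obtain ⟨a, ⟨hal, hac⟩, rfl⟩ := hxS
    obtain ⟨b, ⟨hbl, hbc⟩, rfl⟩ := hyS
    obtain ⟨a', ⟨hal', -⟩, hea⟩ := hxS'
    obtain ⟨b', ⟨hbl', -⟩, heb⟩ := hyS'
    obtain rfl := Sum.inl.inj hea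
    obtain rfl := Sum.inl.inj heb
    rw [M1.uniq_inter hpq hpq' hal hal' hbl hbl'
      (fun he => hxy (congrArg Sum.inl he))]
  · exact absurd (helper12 hf1 hf2 hpq hpure hxy hxS hyS hxS' hyS') id
  · exact absurd (helper13 hf1 hf2 hpq hu' hv' hpure hu'v' hxy hxS hyS hxS' hyS') id
  · exact absurd (helper12 hf1 hf2 hpq' hpure' hxy hxS' hyS' hxS hyS) id
  · -- pure2 / pure2
    obtain ⟨a, ⟨hal, hac⟩, rfl⟩ := hxS
    obtain ⟨b, ⟨hbl, hbc⟩, rfl⟩ := hyS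
    obtain ⟨a', ⟨hal', -⟩, hea⟩ := hxS'
    obtain ⟨b', ⟨hbl', -⟩, heb⟩ := hyS'
    obtain rfl := g2f_inj hf1 hea
    obtain rfl := g2f_inj hf1 heb
    rw [M2.uniq_inter hpq hpq' hal hal' hbl hbl'
      (fun he => hxy (congrArg (g2f M0 f1 f2) he))]
  · exact absurd (helper23 hf1 hf2 hpq hu' hv' hpure hu'v' hxy hxS hyS hxS' hyS') id
  · exact absurd (helper13 hf1 hf2 hpq' hu hv hpure' huv (Ne.symm hxy) hyS' hxS' hyS hxS) id
  · exact absurd (helper23 hf1 hf2 hpq' hu hv hpure' huv (Ne.symm hxy) hyS' hxS' hyS hxS) id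
  · exact gL_eq_of_common hf1 hf2 hu hv hu' hv' huv hu'v' hxy hxS hxS' hyS hyS'

end GoodUniq

section M3sec

variable (M0 M1 M2 f1 f2)

lemma R3_symm_swap {a b c : V1 ⊕ V2} (h : R3 M0 M1 M2 f1 f2 a b c) :
    R3 M0 M1 M2 f1 f2 b a c := by
  obtain ⟨⟨h1, h2, h3⟩, hbr⟩ := h
  refine ⟨⟨h1.symm, h3, h2⟩, ?_⟩
  rcases hbr with ⟨x, y, z, hx, hy, hz, ha, hb, hc, hR⟩ |
    ⟨x, y, z, hx, hy, hz, ha, hb, hc, hR⟩ | ⟨u, v, hu, hv, huv, ha, hb, hc⟩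
  · exact Or.inl ⟨y, x, z, hy, hx, hz, hb, ha, hc, M1.symm_bac hR⟩
  · exact Or.inr (Or.inl ⟨y, x, z, hy, hx, hz, hb, ha, hc, M2.symm_bac hR⟩)
  · exact Or.inr (Or.inr ⟨u, v, hu, hv, huv, hb, ha, hc⟩)

lemma R3_symm_rot {a b c : V1 ⊕ V2} (h : R3 M0 M1 M2 f1 f2 a b c) :
    R3 M0 M1 M2 f1 f2 b c a := by
  obtain ⟨⟨h1, h2, h3⟩, hbr⟩ := h
  refine ⟨⟨h3, h1.symm, h2.symm⟩, ?_⟩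
  rcases hbr with ⟨x, y, z, hx, hy, hz, ha, hb, hc, hR⟩ |
    ⟨x, y, z, hx, hy, hz, ha, hb, hc, hR⟩ | ⟨u, v, hu, hv, huv, ha, hb, hc⟩
  · exact Or.inl ⟨y, z, x, hy, hz, hx, hb, hc, ha, M1.symm_bca hR⟩
  · exact Or.inr (Or.inl ⟨y, z, x, hy, hz, hx, hb, hc, ha, M2.symm_bca hR⟩)
  · exact Or.inr (Or.inr ⟨u, v, hu, hv, huv, hb, hc, ha⟩)

open Classical in
noncomputable def wedge3 : (V1 ⊕ V2) → (V1 ⊕ V2) → (V1 ⊕ V2) → (V1 ⊕ V2) → V1 ⊕ V2 :=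
  fun a b c d =>
    if h : a ≠ b ∧ c ≠ d ∧
        lineOf (R3 M0 M1 M2 f1 f2) a b ≠ lineOf (R3 M0 M1 M2 f1 f2) c d ∧
        ∃ p, p ∈ lineOf (R3 M0 M1 M2 f1 f2) a b ∧ p ∈ lineOf (R3 M0 M1 M2 f1 f2) c d ∧
          p ∉ ({a, b, c, d} : Set (V1 ⊕ V2))
    then h.2.2.2.choose else a

variable {M0 M1 M2 f1 f2}

include hf1 hf2 in
lemma R3_mem {a b c : V1 ⊕ V2} (h : R3 M0 M1 M2 f1 f2 a b c) :
    a ∈ carrier3 M0 M1 M2 f1 f2 ∧ b ∈ carrier3 M0 M1 M2 f1 f2 ∧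
      c ∈ carrier3 M0 M1 M2 f1 f2 := by
  obtain ⟨S, hS, ha, hb, hc⟩ := R3_good hf1 hf2 h
  exact ⟨Good_sub hS ha, Good_sub hS hb, Good_sub hS hc⟩

variable (M0 M1 M2 f1 f2)

noncomputable def M3 : WM (V1 ⊕ V2) where
  carrier := carrier3 M0 M1 M2 f1 f2
  R := R3 M0 M1 M2 f1 f2
  wedge := wedge3 M0 M1 M2 f1 f2
  R_mem := fun _ _ _ h => R3_mem hf1 hf2 h
  wedge_mem := by
    intro a b c d ha hb hc hd
    rw [wedge3]
    split
    · next h =>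
      obtain ⟨h1, h2, h3⟩ := h.2.2.2.choose_spec
      rcases mem_lineOf.1 h1 with he | he | hR
      · rw [he]; exact ha
      · rw [he]; exact hb
      · exact (R3_mem hf1 hf2 hR).2.2
    · exact ha
  irrefl := fun _ _ _ h => h.1
  symm_swap := fun _ _ _ h => R3_symm_swap M0 M1 M2 f1 f2 h
  symm_rot := fun _ _ _ h => R3_symm_rot M0 M1 M2 f1 f2 h
  exchange := by
    intro a b c d h1 h2 x y z hx hy hz hxy hxz hyz
    obtain ⟨S, hS, haS, hbS, hcS⟩ := R3_good hf1 hf2 h1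
    obtain ⟨S', hS', haS', hbS', hdS'⟩ := R3_good hf1 hf2 h2
    obtain rfl : S = S' := GoodUniq hf1 hf2 hS hS' h1.1.1 haS haS' hbS hbS'
    have hmem : ∀ w, w ∈ ({a, b, c, d} : Set (V1 ⊕ V2)) → w ∈ S := by
      rintro w (rfl | rfl | rfl | rfl)
      exacts [haS, hbS, hcS, hdS']
    exact GoodTriple hS (hmem x hx) (hmem y hy) (hmem z hz) hxy hxz hyz
  wedge_det := by
    intro a b c d ha hb hc hd
    simp only [wedge3]
    by_cases h : a ≠ b ∧ c ≠ d ∧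
        lineOf (R3 M0 M1 M2 f1 f2) a b ≠ lineOf (R3 M0 M1 M2 f1 f2) c d ∧
        ∃ p, p ∈ lineOf (R3 M0 M1 M2 f1 f2) a b ∧ p ∈ lineOf (R3 M0 M1 M2 f1 f2) c d ∧
          p ∉ ({a, b, c, d} : Set (V1 ⊕ V2))
    · left
      obtain ⟨h1, h2, h3⟩ := h.2.2.2.choose_spec
      rw [dif_pos h]
      exact ⟨h.1, h.2.1, h.2.2.1, h1, h2, h3⟩
    · right
      rw [dif_neg h]
      refine ⟨rfl, ?_⟩
      rintro ⟨p, hab, hcd, hl, hp1, hp2, hp3⟩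
      exact h ⟨hab, hcd, hl, p, hp1, hp2, hp3⟩

end M3sec

section Emb1

include hf1 hf2 in
lemma lineOf3_good {S : Set (V1 ⊕ V2)} (hS : Good M0 M1 M2 f1 f2 S) {x y : V1 ⊕ V2}
    (hx : x ∈ S) (hy : y ∈ S) (hxy : x ≠ y) :
    lineOf (R3 M0 M1 M2 f1 f2) x y = S := by
  ext z
  rw [mem_lineOf]
  constructor
  · rintro (rfl | rfl | hR)
    · exact hx
    · exact hy
    · obtain ⟨S', hS', hx', hy', hz'⟩ := R3_good hf1 hf2 hR
      rwa [GoodUniq hf1 hf2 hS' hS hxy hx' hx hy' hy] at hz'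
  · intro hz
    by_cases hzx : z = x
    · exact Or.inl hzx
    by_cases hzy : z = y
    · exact Or.inr (Or.inl hzy)
    · exact Or.inr (Or.inr (GoodTriple hS hx hy hz hxy
        (fun h => hzx h.symm) (fun h => hzy h.symm)))

include hf1 hf2 in
lemma good_line1 {a b : V1} (ha : a ∈ M1.carrier) (hb : b ∈ M1.carrier) (hab : a ≠ b) :
    ∃ S, Good M0 M1 M2 f1 f2 S ∧ Sum.inl a ∈ S ∧ Sum.inl b ∈ S ∧
    (∀ t, t ∈ lineOf M1.R a b → t ∈ M1.carrier → Sum.inl t ∈ S) ∧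
    (∀ t, Sum.inl t ∈ S → t ∈ lineOf M1.R a b ∧ t ∈ M1.carrier) ∧
    (∀ s : V2, Sum.inr s ∈ S → (∃ u v, u ∈ M0.carrier ∧ v ∈ M0.carrier ∧ u ≠ v ∧
        f1 u ∈ lineOf M1.R a b ∧ f1 v ∈ lineOf M1.R a b ∧
        s ∈ lineOf M2.R (f2 u) (f2 v) ∧ s ∈ M2.carrier) ∧
        ¬ ∃ z, z ∈ M0.carrier ∧ f2 z = s) ∧
    (∀ u v, u ∈ M0.carrier → v ∈ M0.carrier → u ≠ v →
        f1 u ∈ lineOf M1.R a b → f1 v ∈ lineOf M1.R a b →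
        S = gL M0 M1 M2 f1 f2 u v) := by
  by_cases hex : ∃ u v, u ∈ M0.carrier ∧ v ∈ M0.carrier ∧ u ≠ v ∧
      f1 u ∈ lineOf M1.R a b ∧ f1 v ∈ lineOf M1.R a b
  · obtain ⟨u, v, hu, hv, huv, h1, h2⟩ := hex
    have hle : lineOf M1.R (f1 u) (f1 v) = lineOf M1.R a b :=
      M1.line_eq hab h1 h2 (f1_ne hf1 hu hv huv)
    refine ⟨gL M0 M1 M2 f1 f2 u v, Or.inr (Or.inr ⟨u, v, hu, hv, huv, rfl⟩),
      ?_, ?_, ?_, ?_, ?_, ?_⟩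
    · exact Or.inl ⟨a, ⟨hle.symm ▸ lineOf_left _ _, ha⟩, rfl⟩
    · exact Or.inl ⟨b, ⟨hle.symm ▸ lineOf_right _ _, hb⟩, rfl⟩
    · exact fun t htl htc => Or.inl ⟨t, ⟨hle.symm ▸ htl, htc⟩, rfl⟩
    · intro t ht
      obtain ⟨htl, htc⟩ := mem_gL_inl hf1 hf2 hu hv ht
      exact ⟨hle ▸ htl, htc⟩
    · intro s hs
      obtain ⟨hsl, hsc, hg⟩ := mem_gL_inr hs
      refine ⟨⟨u, v, hu, hv, huv, h1, h2, hsl, hsc⟩, ?_⟩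
      rintro ⟨z, hz, rfl⟩
      rw [g2f_base hf2 hz] at hg
      exact absurd hg (by simp)
    · intro u' v' hu' hv' hu'v' h1' h2'
      refine (gL_congr hf1 hf2 hu hv hu' hv' huv hu'v' ?_ ?_).symm
      · exact (map_line1 hf1 hu hv hu').2 (hle.symm ▸ h1')
      · exact (map_line1 hf1 hu hv hv').2 (hle.symm ▸ h2')
  · refine ⟨Sum.inl '' (lineOf M1.R a b ∩ M1.carrier),
      Or.inl ⟨a, b, ha, hb, hab, rfl, hex⟩,
      ⟨a, ⟨lineOf_left _ _, ha⟩, rfl⟩, ⟨b, ⟨lineOf_right _ _, hb⟩, rfl⟩,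
      fun t htl htc => ⟨t, ⟨htl, htc⟩, rfl⟩, ?_, ?_, ?_⟩
    · rintro t ⟨t', ⟨htl, htc⟩, he⟩
      obtain rfl := Sum.inl.inj he
      exact ⟨htl, htc⟩
    · rintro s ⟨t', -, he⟩
      exact absurd he (by simp)
    · intro u' v' hu' hv' hu'v' h1' h2'
      exact absurd ⟨u', v', hu', hv', hu'v', h1', h2'⟩ hex

include hf1 hf2 in
lemma good_line2 {a b : V2} (ha : a ∈ M2.carrier) (hb : b ∈ M2.carrier) (hab : a ≠ b) :
    ∃ S, Good M0 M1 M2 f1 f2 S ∧ g2f M0 f1 f2 a ∈ S ∧ g2f M0 f1 f2 b ∈ S ∧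
    (∀ t, t ∈ lineOf M2.R a b → t ∈ M2.carrier → g2f M0 f1 f2 t ∈ S) ∧
    (∀ t, t ∈ M2.carrier → g2f M0 f1 f2 t ∈ S → t ∈ lineOf M2.R a b) ∧
    (∀ t : V1, Sum.inl t ∈ S → (¬ ∃ z, z ∈ M0.carrier ∧ f1 z = t) →
        ∃ u v, u ∈ M0.carrier ∧ v ∈ M0.carrier ∧ u ≠ v ∧
        f2 u ∈ lineOf M2.R a b ∧ f2 v ∈ lineOf M2.R a b ∧
        t ∈ lineOf M1.R (f1 u) (f1 v) ∧ t ∈ M1.carrier) ∧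
    (∀ u v, u ∈ M0.carrier → v ∈ M0.carrier → u ≠ v →
        f2 u ∈ lineOf M2.R a b → f2 v ∈ lineOf M2.R a b →
        S = gL M0 M1 M2 f1 f2 u v) ∧
    (∀ s : V2, Sum.inr s ∈ S → s ∈ M2.carrier ∧ g2f M0 f1 f2 s = Sum.inr s) := by
  by_cases hex : ∃ u v, u ∈ M0.carrier ∧ v ∈ M0.carrier ∧ u ≠ v ∧
      f2 u ∈ lineOf M2.R a b ∧ f2 v ∈ lineOf M2.R a b
  · obtain ⟨u, v, hu, hv, huv, h1, h2⟩ := hex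
    have hle : lineOf M2.R (f2 u) (f2 v) = lineOf M2.R a b :=
      M2.line_eq hab h1 h2 (f2_ne hf2 hu hv huv)
    refine ⟨gL M0 M1 M2 f1 f2 u v, Or.inr (Or.inr ⟨u, v, hu, hv, huv, rfl⟩),
      ?_, ?_, ?_, ?_, ?_, ?_, ?_⟩
    · exact Or.inr ⟨a, ⟨hle.symm ▸ lineOf_left _ _, ha⟩, rfl⟩
    · exact Or.inr ⟨b, ⟨hle.symm ▸ lineOf_right _ _, hb⟩, rfl⟩
    · exact fun t htl htc => Or.inr ⟨t, ⟨hle.symm ▸ htl, htc⟩, rfl⟩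
    · intro t htc ht
      exact hle ▸ mem_gL_g2 hf1 hf2 hu hv htc ht
    · intro t ht hnot
      obtain ⟨htl, htc⟩ := mem_gL_inl hf1 hf2 hu hv ht
      exact ⟨u, v, hu, hv, huv, h1, h2, htl, htc⟩
    · intro u' v' hu' hv' hu'v' h1' h2'
      refine (gL_congr hf1 hf2 hu hv hu' hv' huv hu'v' ?_ ?_).symm
      · exact (map_line2 hf2 hu hv hu').2 (hle.symm ▸ h1')
      · exact (map_line2 hf2 hu hv hv').2 (hle.symm ▸ h2')
    · intro s hs
      obtain ⟨-, hsc, hg⟩ := mem_gL_inr hs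
      exact ⟨hsc, hg⟩
  · refine ⟨g2f M0 f1 f2 '' (lineOf M2.R a b ∩ M2.carrier),
      Or.inr (Or.inl ⟨a, b, ha, hb, hab, rfl, hex⟩),
      ⟨a, ⟨lineOf_left _ _, ha⟩, rfl⟩, ⟨b, ⟨lineOf_right _ _, hb⟩, rfl⟩,
      fun t htl htc => ⟨t, ⟨htl, htc⟩, rfl⟩, ?_, ?_, ?_, ?_⟩
    · rintro t htc ⟨t', ⟨htl, htc'⟩, he⟩
      obtain rfl := g2f_inj hf1 he
      exact htl
    · rintro t ⟨m, ⟨hml, hmc⟩, he⟩ hnot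
      obtain ⟨z, hz, hfz, hft⟩ := g2f_eq_inl he
      exact absurd ⟨z, hz, hft⟩ hnot
    · intro u' v' hu' hv' hu'v' h1' h2'
      exact absurd ⟨u', v', hu', hv', hu'v', h1', h2'⟩ hex
    · rintro s ⟨m, ⟨hml, hmc⟩, he⟩
      by_cases hm : ∃ z, z ∈ M0.carrier ∧ f2 z = m
      · rw [g2f, dif_pos hm] at he; exact absurd he (by simp)
      · rw [g2f, dif_neg hm] at he
        obtain rfl := Sum.inr.inj he
        exact ⟨hmc, by rw [g2f, dif_neg hm]⟩

end Emb1

section RelIff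

include hf1 hf2 in
lemma rel1_iff {a b c : V1} (ha : a ∈ M1.carrier) (hb : b ∈ M1.carrier)
    (hc : c ∈ M1.carrier) :
    M1.R a b c ↔ R3 M0 M1 M2 f1 f2 (Sum.inl a) (Sum.inl b) (Sum.inl c) := by
  constructor
  · intro h
    obtain ⟨h1, h2, h3⟩ := M1.irrefl _ _ _ h
    exact ⟨⟨fun he => h1 (Sum.inl.inj he), fun he => h2 (Sum.inl.inj he),
      fun he => h3 (Sum.inl.inj he)⟩,
      Or.inl ⟨a, b, c, ha, hb, hc, rfl, rfl, rfl, h⟩⟩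
  · intro h
    have hab : a ≠ b := fun he => h.1.1 (congrArg _ he)
    have hac : a ≠ c := fun he => h.1.2.1 (congrArg _ he)
    have hbc : b ≠ c := fun he => h.1.2.2 (congrArg _ he)
    obtain ⟨S, hS, haS, hbS, hcS⟩ := R3_good hf1 hf2 h
    rcases hS with ⟨p, q, hp, hq, hpq, rfl, -⟩ | ⟨p, q, hp, hq, hpq, rfl, -⟩ |
      ⟨u, v, hu, hv, huv, rfl⟩
    · obtain ⟨a', ⟨hal, -⟩, hea⟩ := haS
      obtain ⟨b', ⟨hbl, -⟩, heb⟩ := hbS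
      obtain ⟨c', ⟨hcl, -⟩, hec⟩ := hcS
      obtain rfl := Sum.inl.inj hea
      obtain rfl := Sum.inl.inj heb
      obtain rfl := Sum.inl.inj hec
      exact M1.coll3 hpq hal hbl hcl hab hac hbc
    · obtain ⟨a', ⟨hal, -⟩, hea⟩ := haS
      obtain ⟨b', ⟨hbl, -⟩, heb⟩ := hbS
      obtain ⟨c', ⟨hcl, -⟩, hec⟩ := hcS
      obtain ⟨za, hza, hfa, hga⟩ := g2f_eq_inl hea
      obtain ⟨zb, hzb, hfb, hgb⟩ := g2f_eq_inl heb
      obtain ⟨zc, hzc, hfc, hgc⟩ := g2f_eq_inl hec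
      have hzab : za ≠ zb := fun he => hab (hga.symm.trans (he ▸ hgb))
      have hzac : za ≠ zc := fun he => hac (hga.symm.trans (he ▸ hgc))
      have hzbc : zb ≠ zc := fun he => hbc (hgb.symm.trans (he ▸ hgc))
      have hR2 : M2.R (f2 za) (f2 zb) (f2 zc) :=
        M2.coll3 hpq (hfa.symm ▸ hal) (hfb.symm ▸ hbl) (hfc.symm ▸ hcl)
          (f2_ne hf2 hza hzb hzab) (f2_ne hf2 hza hzc hzac) (f2_ne hf2 hzb hzc hzbc)
      have hR0 : M0.R za zb zc := (hf2.rel _ hza _ hzb _ hzc).2 hR2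
      have hR1 : M1.R (f1 za) (f1 zb) (f1 zc) := (hf1.rel _ hza _ hzb _ hzc).1 hR0
      rwa [hga, hgb, hgc] at hR1
    · obtain ⟨hal, -⟩ := mem_gL_inl hf1 hf2 hu hv haS
      obtain ⟨hbl, -⟩ := mem_gL_inl hf1 hf2 hu hv hbS
      obtain ⟨hcl, -⟩ := mem_gL_inl hf1 hf2 hu hv hcS
      exact M1.coll3 (f1_ne hf1 hu hv huv) hal hbl hcl hab hac hbc

include hf1 hf2 in
lemma rel2_iff {a b c : V2} (ha : a ∈ M2.carrier) (hb : b ∈ M2.carrier)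
    (hc : c ∈ M2.carrier) :
    M2.R a b c ↔ R3 M0 M1 M2 f1 f2 (g2f M0 f1 f2 a) (g2f M0 f1 f2 b) (g2f M0 f1 f2 c) := by
  constructor
  · intro h
    obtain ⟨h1, h2, h3⟩ := M2.irrefl _ _ _ h
    exact ⟨⟨fun he => h1 (g2f_inj hf1 he), fun he => h2 (g2f_inj hf1 he),
      fun he => h3 (g2f_inj hf1 he)⟩,
      Or.inr (Or.inl ⟨a, b, c, ha, hb, hc, rfl, rfl, rfl, h⟩)⟩
  · intro h
    have hab : a ≠ b := fun he => h.1.1 (congrArg _ he)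
    have hac : a ≠ c := fun he => h.1.2.1 (congrArg _ he)
    have hbc : b ≠ c := fun he => h.1.2.2 (congrArg _ he)
    obtain ⟨S, hS, haS, hbS, hcS⟩ := R3_good hf1 hf2 h
    rcases hS with ⟨p, q, hp, hq, hpq, rfl, -⟩ | ⟨p, q, hp, hq, hpq, rfl, -⟩ |
      ⟨u, v, hu, hv, huv, rfl⟩
    · obtain ⟨a', ⟨hal, -⟩, hea⟩ := haS
      obtain ⟨b', ⟨hbl, -⟩, heb⟩ := hbS
      obtain ⟨c', ⟨hcl, -⟩, hec⟩ := hcS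
      obtain ⟨za, hza, hfa, hga⟩ := g2f_eq_inl hea.symm
      obtain ⟨zb, hzb, hfb, hgb⟩ := g2f_eq_inl heb.symm
      obtain ⟨zc, hzc, hfc, hgc⟩ := g2f_eq_inl hec.symm
      have hzab : za ≠ zb := fun he => hab (hfa.symm.trans (he ▸ hfb))
      have hzac : za ≠ zc := fun he => hac (hfa.symm.trans (he ▸ hfc))
      have hzbc : zb ≠ zc := fun he => hbc (hfb.symm.trans (he ▸ hfc))
      have hR1 : M1.R (f1 za) (f1 zb) (f1 zc) :=
        M1.coll3 hpq (hga.symm ▸ hal) (hgb.symm ▸ hbl) (hgc.symm ▸ hcl)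
          (f1_ne hf1 hza hzb hzab) (f1_ne hf1 hza hzc hzac) (f1_ne hf1 hzb hzc hzbc)
      have hR0 : M0.R za zb zc := (hf1.rel _ hza _ hzb _ hzc).2 hR1
      have hR2 : M2.R (f2 za) (f2 zb) (f2 zc) := (hf2.rel _ hza _ hzb _ hzc).1 hR0
      rwa [hfa, hfb, hfc] at hR2
    · obtain ⟨a', ⟨hal, -⟩, hea⟩ := haS
      obtain ⟨b', ⟨hbl, -⟩, heb⟩ := hbS
      obtain ⟨c', ⟨hcl, -⟩, hec⟩ := hcS
      obtain rfl := g2f_inj hf1 hea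
      obtain rfl := g2f_inj hf1 heb
      obtain rfl := g2f_inj hf1 hec
      exact M2.coll3 hpq hal hbl hcl hab hac hbc
    · have hal := mem_gL_g2 hf1 hf2 hu hv ha haS
      have hbl := mem_gL_g2 hf1 hf2 hu hv hb hbS
      have hcl := mem_gL_g2 hf1 hf2 hu hv hc hcS
      exact M2.coll3 (f2_ne hf2 hu hv huv) hal hbl hcl hab hac hbc

end RelIff

section Wedge1

include hf1 hf2 in
lemma line3_iff1 {a b c d : V1} (ha : a ∈ M1.carrier) (hb : b ∈ M1.carrier)
    (hc : c ∈ M1.carrier) (hd : d ∈ M1.carrier) (hab : a ≠ b) (hcd : c ≠ d) :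
    (lineOf (R3 M0 M1 M2 f1 f2) (Sum.inl a) (Sum.inl b) =
      lineOf (R3 M0 M1 M2 f1 f2) (Sum.inl c) (Sum.inl d)) ↔
    lineOf M1.R a b = lineOf M1.R c d := by
  obtain ⟨Sab, hSab, haS, hbS, fwdab, bwdab, -, -⟩ := good_line1 hf1 hf2 ha hb hab
  obtain ⟨Scd, hScd, hcS, hdS, fwdcd, bwdcd, -, -⟩ := good_line1 hf1 hf2 hc hd hcd
  have hlab := lineOf3_good hf1 hf2 hSab haS hbS (fun he => hab (Sum.inl.inj he))
  have hlcd := lineOf3_good hf1 hf2 hScd hcS hdS (fun he => hcd (Sum.inl.inj he))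
  rw [hlab, hlcd]
  constructor
  · intro he
    have hc' := (bwdab c (he.symm ▸ hcS)).1
    have hd' := (bwdab d (he.symm ▸ hdS)).1
    exact (M1.line_eq hab hc' hd' hcd).symm
  · intro he
    have h1 : Sum.inl c ∈ Sab := fwdab c (he ▸ lineOf_left _ _) hc
    have h2 : Sum.inl d ∈ Sab := fwdab d (he ▸ lineOf_right _ _) hd
    exact GoodUniq hf1 hf2 hSab hScd (fun h => hcd (Sum.inl.inj h)) h1 hcS h2 hdS

include hf1 hf2 in
lemma wedge1_pres {a b c d : V1} (ha : a ∈ M1.carrier) (hb : b ∈ M1.carrier)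
    (hc : c ∈ M1.carrier) (hd : d ∈ M1.carrier) :
    Sum.inl (M1.wedge a b c d) =
      wedge3 M0 M1 M2 f1 f2 (Sum.inl a) (Sum.inl b) (Sum.inl c) (Sum.inl d) := by
  rcases M1.wedge_det a b c d ha hb hc hd with ⟨hab, hcd, hld, hw1, hw2, hw4⟩ | ⟨hwa, hnone⟩
  · set w := M1.wedge a b c d with hwdef
    have hwc : w ∈ M1.carrier := M1.wedge_mem _ _ _ _ ha hb hc hd
    obtain ⟨Sab, hSab, haS, hbS, fwdab, bwdab, -, -⟩ := good_line1 hf1 hf2 ha hb hab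
    obtain ⟨Scd, hScd, hcS, hdS, fwdcd, bwdcd, -, -⟩ := good_line1 hf1 hf2 hc hd hcd
    have hlab := lineOf3_good hf1 hf2 hSab haS hbS (fun he => hab (Sum.inl.inj he))
    have hlcd := lineOf3_good hf1 hf2 hScd hcS hdS (fun he => hcd (Sum.inl.inj he))
    have hldW : lineOf (R3 M0 M1 M2 f1 f2) (Sum.inl a) (Sum.inl b) ≠
        lineOf (R3 M0 M1 M2 f1 f2) (Sum.inl c) (Sum.inl d) :=
      fun he => hld ((line3_iff1 hf1 hf2 ha hb hc hd hab hcd).1 he)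
    have hp1 : Sum.inl w ∈ lineOf (R3 M0 M1 M2 f1 f2) (Sum.inl a) (Sum.inl b) := by
      rw [hlab]; exact fwdab w hw1 hwc
    have hp2 : Sum.inl w ∈ lineOf (R3 M0 M1 M2 f1 f2) (Sum.inl c) (Sum.inl d) := by
      rw [hlcd]; exact fwdcd w hw2 hwc
    have hp4 : Sum.inl w ∉
        ({Sum.inl a, Sum.inl b, Sum.inl c, Sum.inl d} : Set (V1 ⊕ V2)) := by
      simp only [Set.mem_insert_iff, Set.mem_singleton_iff] at hw4 ⊢
      push_neg at hw4 ⊢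
      exact ⟨fun he => hw4.1 (Sum.inl.inj he), fun he => hw4.2.1 (Sum.inl.inj he),
        fun he => hw4.2.2.1 (Sum.inl.inj he), fun he => hw4.2.2.2 (Sum.inl.inj he)⟩
    have hcond : (Sum.inl a : V1 ⊕ V2) ≠ Sum.inl b ∧ (Sum.inl c : V1 ⊕ V2) ≠ Sum.inl d ∧
        lineOf (R3 M0 M1 M2 f1 f2) (Sum.inl a) (Sum.inl b) ≠
          lineOf (R3 M0 M1 M2 f1 f2) (Sum.inl c) (Sum.inl d) ∧
        ∃ p, p ∈ lineOf (R3 M0 M1 M2 f1 f2) (Sum.inl a) (Sum.inl b) ∧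
          p ∈ lineOf (R3 M0 M1 M2 f1 f2) (Sum.inl c) (Sum.inl d) ∧
          p ∉ ({Sum.inl a, Sum.inl b, Sum.inl c, Sum.inl d} : Set (V1 ⊕ V2)) := by
      refine ⟨fun he => hab ?_, fun he => hcd ?_, hldW, Sum.inl w, hp1, hp2, hp4⟩
      · exact Sum.inl.inj he
      · exact Sum.inl.inj he
    rw [wedge3, dif_pos hcond]
    obtain ⟨q1, q2, -⟩ := hcond.2.2.2.choose_spec
    by_contra hne
    exact hldW ((M3 M0 M1 M2 f1 f2 hf1 hf2).uniq_inter
      (fun he => hab (Sum.inl.inj he)) (fun he => hcd (Sum.inl.inj he))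
      hp1 hp2 q1 q2 hne)
  · have hncond : ¬ ((Sum.inl a : V1 ⊕ V2) ≠ Sum.inl b ∧ (Sum.inl c : V1 ⊕ V2) ≠ Sum.inl d ∧
        lineOf (R3 M0 M1 M2 f1 f2) (Sum.inl a) (Sum.inl b) ≠
          lineOf (R3 M0 M1 M2 f1 f2) (Sum.inl c) (Sum.inl d) ∧
        ∃ p, p ∈ lineOf (R3 M0 M1 M2 f1 f2) (Sum.inl a) (Sum.inl b) ∧
          p ∈ lineOf (R3 M0 M1 M2 f1 f2) (Sum.inl c) (Sum.inl d) ∧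
          p ∉ ({Sum.inl a, Sum.inl b, Sum.inl c, Sum.inl d} : Set (V1 ⊕ V2))) := by
      rintro ⟨hne1, hne2, hldW, p, hp1, hp2, hp3⟩
      have hab : a ≠ b := fun he => hne1 (congrArg _ he)
      have hcd : c ≠ d := fun he => hne2 (congrArg _ he)
      obtain ⟨Sab, hSab, haS, hbS, fwdab, bwdab, inrab, -⟩ := good_line1 hf1 hf2 ha hb hab
      obtain ⟨Scd, hScd, hcS, hdS, fwdcd, bwdcd, inrcd, -⟩ := good_line1 hf1 hf2 hc hd hcd
      have hlab := lineOf3_good hf1 hf2 hSab haS hbS (fun he => hab (Sum.inl.inj he))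
      have hlcd := lineOf3_good hf1 hf2 hScd hcS hdS (fun he => hcd (Sum.inl.inj he))
      rw [hlab] at hp1
      rw [hlcd] at hp2
      have hL1ne : lineOf M1.R a b ≠ lineOf M1.R c d :=
        fun he => hldW ((line3_iff1 hf1 hf2 ha hb hc hd hab hcd).2 he)
      simp only [Set.mem_insert_iff, Set.mem_singleton_iff] at hp3
      push_neg at hp3
      match p, hp1, hp2, hp3 with
      | Sum.inl t, hp1, hp2, hp3 =>
        obtain ⟨ht1, htc⟩ := bwdab t hp1
        obtain ⟨ht2, -⟩ := bwdcd t hp2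
        refine hnone ⟨t, hab, hcd, hL1ne, ht1, ht2, ?_⟩
        simp only [Set.mem_insert_iff, Set.mem_singleton_iff]
        push_neg
        exact ⟨fun he => hp3.1 (congrArg _ he), fun he => hp3.2.1 (congrArg _ he),
          fun he => hp3.2.2.1 (congrArg _ he), fun he => hp3.2.2.2 (congrArg _ he)⟩
      | Sum.inr s, hp1, hp2, hp3 =>
        obtain ⟨⟨u, v, hu, hv, huv, hf1u, hf1v, hsl, hsc⟩, hsim⟩ := inrab s hp1
        obtain ⟨⟨u', v', hu', hv', hu'v', hf1u', hf1v', hsl', -⟩, -⟩ := inrcd s hp2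
        by_cases hL2 : lineOf M2.R (f2 u) (f2 v) = lineOf M2.R (f2 u') (f2 v')
        · have e1 : lineOf M1.R (f1 u) (f1 v) = lineOf M1.R a b :=
            M1.line_eq hab hf1u hf1v (f1_ne hf1 hu hv huv)
          have hu'' : u' ∈ lineOf M0.R u v :=
            (map_line2 hf2 hu hv hu').2 (hL2.symm ▸ lineOf_left _ _)
          have hv'' : v' ∈ lineOf M0.R u v :=
            (map_line2 hf2 hu hv hv').2 (hL2.symm ▸ lineOf_right _ _)
          have hα : f1 u' ∈ lineOf M1.R a b := e1 ▸ (map_line1 hf1 hu hv hu').1 hu''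
          have hβ : f1 v' ∈ lineOf M1.R a b := e1 ▸ (map_line1 hf1 hu hv hv').1 hv''
          exact hL1ne (M1.uniq_inter hab hcd hα hf1u' hβ hf1v'
            (f1_ne hf1 hu' hv' hu'v'))
        · have hL0 : lineOf M0.R u v ≠ lineOf M0.R u' v' := by
            intro he
            apply hL2
            have hh1 : f2 u' ∈ lineOf M2.R (f2 u) (f2 v) :=
              (map_line2 hf2 hu hv hu').1 (he ▸ lineOf_left _ _)
            have hh2 : f2 v' ∈ lineOf M2.R (f2 u) (f2 v) :=
              (map_line2 hf2 hu hv hv').1 (he ▸ lineOf_right _ _)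
            exact (M2.line_eq (f2_ne hf2 hu hv huv) hh1 hh2
              (f2_ne hf2 hu' hv' hu'v')).symm
          obtain ⟨z, hz, hse, -, -⟩ :=
            common_pt_M2 hf2 hu hv hu' hv' huv hu'v' hL0 hsc hsl hsl'
          exact hsim ⟨z, hz, hse.symm⟩
    rw [wedge3, dif_neg hncond, hwa]

end Wedge1

section Wedge2

include hf1 hf2 in
lemma line3_iff2 {a b c d : V2} (ha : a ∈ M2.carrier) (hb : b ∈ M2.carrier)
    (hc : c ∈ M2.carrier) (hd : d ∈ M2.carrier) (hab : a ≠ b) (hcd : c ≠ d) :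
    (lineOf (R3 M0 M1 M2 f1 f2) (g2f M0 f1 f2 a) (g2f M0 f1 f2 b) =
      lineOf (R3 M0 M1 M2 f1 f2) (g2f M0 f1 f2 c) (g2f M0 f1 f2 d)) ↔
    lineOf M2.R a b = lineOf M2.R c d := by
  obtain ⟨Sab, hSab, haS, hbS, fwdab, bwdab, -, -, -⟩ := good_line2 hf1 hf2 ha hb hab
  obtain ⟨Scd, hScd, hcS, hdS, fwdcd, bwdcd, -, -, -⟩ := good_line2 hf1 hf2 hc hd hcd
  have hlab := lineOf3_good hf1 hf2 hSab haS hbS (fun he => hab (g2f_inj hf1 he))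
  have hlcd := lineOf3_good hf1 hf2 hScd hcS hdS (fun he => hcd (g2f_inj hf1 he))
  rw [hlab, hlcd]
  constructor
  · intro he
    have hc' := bwdab c hc (he.symm ▸ hcS)
    have hd' := bwdab d hd (he.symm ▸ hdS)
    exact (M2.line_eq hab hc' hd' hcd).symm
  · intro he
    have h1 : g2f M0 f1 f2 c ∈ Sab := fwdab c (he ▸ lineOf_left _ _) hc
    have h2 : g2f M0 f1 f2 d ∈ Sab := fwdab d (he ▸ lineOf_right _ _) hd
    exact GoodUniq hf1 hf2 hSab hScd (fun h => hcd (g2f_inj hf1 h)) h1 hcS h2 hdS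

include hf1 hf2 in
lemma wedge2_pres {a b c d : V2} (ha : a ∈ M2.carrier) (hb : b ∈ M2.carrier)
    (hc : c ∈ M2.carrier) (hd : d ∈ M2.carrier) :
    g2f M0 f1 f2 (M2.wedge a b c d) =
      wedge3 M0 M1 M2 f1 f2 (g2f M0 f1 f2 a) (g2f M0 f1 f2 b)
        (g2f M0 f1 f2 c) (g2f M0 f1 f2 d) := by
  rcases M2.wedge_det a b c d ha hb hc hd with ⟨hab, hcd, hld, hw1, hw2, hw4⟩ | ⟨hwa, hnone⟩
  · set w := M2.wedge a b c d with hwdef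
    have hwc : w ∈ M2.carrier := M2.wedge_mem _ _ _ _ ha hb hc hd
    obtain ⟨Sab, hSab, haS, hbS, fwdab, bwdab, -, -, -⟩ := good_line2 hf1 hf2 ha hb hab
    obtain ⟨Scd, hScd, hcS, hdS, fwdcd, bwdcd, -, -, -⟩ := good_line2 hf1 hf2 hc hd hcd
    have hlab := lineOf3_good hf1 hf2 hSab haS hbS (fun he => hab (g2f_inj hf1 he))
    have hlcd := lineOf3_good hf1 hf2 hScd hcS hdS (fun he => hcd (g2f_inj hf1 he))
    have hldW : lineOf (R3 M0 M1 M2 f1 f2) (g2f M0 f1 f2 a) (g2f M0 f1 f2 b) ≠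
        lineOf (R3 M0 M1 M2 f1 f2) (g2f M0 f1 f2 c) (g2f M0 f1 f2 d) :=
      fun he => hld ((line3_iff2 hf1 hf2 ha hb hc hd hab hcd).1 he)
    have hp1 : g2f M0 f1 f2 w ∈
        lineOf (R3 M0 M1 M2 f1 f2) (g2f M0 f1 f2 a) (g2f M0 f1 f2 b) := by
      rw [hlab]; exact fwdab w hw1 hwc
    have hp2 : g2f M0 f1 f2 w ∈
        lineOf (R3 M0 M1 M2 f1 f2) (g2f M0 f1 f2 c) (g2f M0 f1 f2 d) := by
      rw [hlcd]; exact fwdcd w hw2 hwc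
    have hp4 : g2f M0 f1 f2 w ∉
        ({g2f M0 f1 f2 a, g2f M0 f1 f2 b, g2f M0 f1 f2 c, g2f M0 f1 f2 d} :
          Set (V1 ⊕ V2)) := by
      simp only [Set.mem_insert_iff, Set.mem_singleton_iff] at hw4 ⊢
      push_neg at hw4 ⊢
      exact ⟨fun he => hw4.1 (g2f_inj hf1 he), fun he => hw4.2.1 (g2f_inj hf1 he),
        fun he => hw4.2.2.1 (g2f_inj hf1 he), fun he => hw4.2.2.2 (g2f_inj hf1 he)⟩
    have hcond : g2f M0 f1 f2 a ≠ g2f M0 f1 f2 b ∧ g2f M0 f1 f2 c ≠ g2f M0 f1 f2 d ∧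
        lineOf (R3 M0 M1 M2 f1 f2) (g2f M0 f1 f2 a) (g2f M0 f1 f2 b) ≠
          lineOf (R3 M0 M1 M2 f1 f2) (g2f M0 f1 f2 c) (g2f M0 f1 f2 d) ∧
        ∃ p, p ∈ lineOf (R3 M0 M1 M2 f1 f2) (g2f M0 f1 f2 a) (g2f M0 f1 f2 b) ∧
          p ∈ lineOf (R3 M0 M1 M2 f1 f2) (g2f M0 f1 f2 c) (g2f M0 f1 f2 d) ∧
          p ∉ ({g2f M0 f1 f2 a, g2f M0 f1 f2 b, g2f M0 f1 f2 c, g2f M0 f1 f2 d} :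
            Set (V1 ⊕ V2)) := by
      refine ⟨fun he => hab (g2f_inj hf1 he), fun he => hcd (g2f_inj hf1 he), hldW,
        g2f M0 f1 f2 w, hp1, hp2, hp4⟩
    rw [wedge3, dif_pos hcond]
    obtain ⟨q1, q2, -⟩ := hcond.2.2.2.choose_spec
    by_contra hne
    exact hldW ((M3 M0 M1 M2 f1 f2 hf1 hf2).uniq_inter
      (fun he => hab (g2f_inj hf1 he)) (fun he => hcd (g2f_inj hf1 he))
      hp1 hp2 q1 q2 hne)
  · have hncond : ¬ (g2f M0 f1 f2 a ≠ g2f M0 f1 f2 b ∧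
        g2f M0 f1 f2 c ≠ g2f M0 f1 f2 d ∧
        lineOf (R3 M0 M1 M2 f1 f2) (g2f M0 f1 f2 a) (g2f M0 f1 f2 b) ≠
          lineOf (R3 M0 M1 M2 f1 f2) (g2f M0 f1 f2 c) (g2f M0 f1 f2 d) ∧
        ∃ p, p ∈ lineOf (R3 M0 M1 M2 f1 f2) (g2f M0 f1 f2 a) (g2f M0 f1 f2 b) ∧
          p ∈ lineOf (R3 M0 M1 M2 f1 f2) (g2f M0 f1 f2 c) (g2f M0 f1 f2 d) ∧
          p ∉ ({g2f M0 f1 f2 a, g2f M0 f1 f2 b, g2f M0 f1 f2 c, g2f M0 f1 f2 d} :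
            Set (V1 ⊕ V2))) := by
      rintro ⟨hne1, hne2, hldW, p, hp1, hp2, hp3⟩
      have hab : a ≠ b := fun he => hne1 (congrArg _ he)
      have hcd : c ≠ d := fun he => hne2 (congrArg _ he)
      obtain ⟨Sab, hSab, haS, hbS, fwdab, bwdab, fgnab, -, natab⟩ :=
        good_line2 hf1 hf2 ha hb hab
      obtain ⟨Scd, hScd, hcS, hdS, fwdcd, bwdcd, fgncd, -, natcd⟩ :=
        good_line2 hf1 hf2 hc hd hcd
      have hlab := lineOf3_good hf1 hf2 hSab haS hbS (fun he => hab (g2f_inj hf1 he))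
      have hlcd := lineOf3_good hf1 hf2 hScd hcS hdS (fun he => hcd (g2f_inj hf1 he))
      rw [hlab] at hp1
      rw [hlcd] at hp2
      have hL2ne : lineOf M2.R a b ≠ lineOf M2.R c d :=
        fun he => hldW ((line3_iff2 hf1 hf2 ha hb hc hd hab hcd).2 he)
      simp only [Set.mem_insert_iff, Set.mem_singleton_iff] at hp3
      push_neg at hp3
      match p, hp1, hp2, hp3 with
      | Sum.inr s, hp1, hp2, hp3 =>
        obtain ⟨hsc, hg⟩ := natab s hp1
        have hsl : s ∈ lineOf M2.R a b := bwdab s hsc (by rw [hg]; exact hp1)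
        have hsl' : s ∈ lineOf M2.R c d := bwdcd s hsc (by rw [hg]; exact hp2)
        refine hnone ⟨s, hab, hcd, hL2ne, hsl, hsl', ?_⟩
        simp only [Set.mem_insert_iff, Set.mem_singleton_iff]
        push_neg
        refine ⟨fun he => hp3.1 ?_, fun he => hp3.2.1 ?_, fun he => hp3.2.2.1 ?_,
          fun he => hp3.2.2.2 ?_⟩ <;> (subst he; rw [hg])
      | Sum.inl t, hp1, hp2, hp3 =>
        by_cases himg : ∃ z, z ∈ M0.carrier ∧ f1 z = t
        · obtain ⟨z, hz, rfl⟩ := himg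
          have hgz : g2f M0 f1 f2 (f2 z) = Sum.inl (f1 z) := g2f_base hf2 hz
          have hzc : f2 z ∈ M2.carrier := hf2.maps _ hz
          have hsl : f2 z ∈ lineOf M2.R a b := bwdab _ hzc (by rw [hgz]; exact hp1)
          have hsl' : f2 z ∈ lineOf M2.R c d := bwdcd _ hzc (by rw [hgz]; exact hp2)
          refine hnone ⟨f2 z, hab, hcd, hL2ne, hsl, hsl', ?_⟩
          simp only [Set.mem_insert_iff, Set.mem_singleton_iff]
          push_neg
          refine ⟨fun he => hp3.1 ?_, fun he => hp3.2.1 ?_, fun he => hp3.2.2.1 ?_,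
            fun he => hp3.2.2.2 ?_⟩ <;> rw [← he, hgz]
        · obtain ⟨u, v, hu, hv, huv, hf2u, hf2v, htl, htc⟩ := fgnab t hp1 himg
          obtain ⟨u', v', hu', hv', hu'v', hf2u', hf2v', htl', -⟩ := fgncd t hp2 himg
          by_cases hL1 : lineOf M1.R (f1 u) (f1 v) = lineOf M1.R (f1 u') (f1 v')
          · have e1 : lineOf M2.R (f2 u) (f2 v) = lineOf M2.R a b :=
              M2.line_eq hab hf2u hf2v (f2_ne hf2 hu hv huv)
            have hu'' : u' ∈ lineOf M0.R u v :=
              (map_line1 hf1 hu hv hu').2 (hL1.symm ▸ lineOf_left _ _)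
            have hv'' : v' ∈ lineOf M0.R u v :=
              (map_line1 hf1 hu hv hv').2 (hL1.symm ▸ lineOf_right _ _)
            have hα : f2 u' ∈ lineOf M2.R a b := e1 ▸ (map_line2 hf2 hu hv hu').1 hu''
            have hβ : f2 v' ∈ lineOf M2.R a b := e1 ▸ (map_line2 hf2 hu hv hv').1 hv''
            exact hL2ne (M2.uniq_inter hab hcd hα hf2u' hβ hf2v'
              (f2_ne hf2 hu' hv' hu'v'))
          · have hL0 : lineOf M0.R u v ≠ lineOf M0.R u' v' := by
              intro he
              apply hL1
              have hh1 : f1 u' ∈ lineOf M1.R (f1 u) (f1 v) :=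
                (map_line1 hf1 hu hv hu').1 (he ▸ lineOf_left _ _)
              have hh2 : f1 v' ∈ lineOf M1.R (f1 u) (f1 v) :=
                (map_line1 hf1 hu hv hv').1 (he ▸ lineOf_right _ _)
              exact (M1.line_eq (f1_ne hf1 hu hv huv) hh1 hh2
                (f1_ne hf1 hu' hv' hu'v')).symm
            obtain ⟨z, hz, hte, -, -⟩ :=
              common_pt_M1 hf1 hu hv hu' hv' huv hu'v' hL0 htc htl htl'
            exact himg ⟨z, hz, hte.symm⟩
    rw [wedge3, dif_neg hncond, hwa]

end Wedge2

section OmitsSec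

include hf1 hf2 in
lemma c1c2_c0 {q : V1 ⊕ V2} (h1 : ∃ t, t ∈ M1.carrier ∧ Sum.inl t = q)
    (h2 : ∃ m, m ∈ M2.carrier ∧ g2f M0 f1 f2 m = q) :
    ∃ z, z ∈ M0.carrier ∧ Sum.inl (f1 z) = q := by
  obtain ⟨t, ht, rfl⟩ := h1
  obtain ⟨m, hm, he⟩ := h2
  obtain ⟨z, hz, -, hft⟩ := g2f_eq_inl he
  exact ⟨z, hz, by rw [hft]⟩

include hf1 hf2 in
lemma K1 {S : Set (V1 ⊕ V2)} (hS : Good M0 M1 M2 f1 f2 S) {x y : V1 ⊕ V2}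
    (hx : x ∈ S) (hy : y ∈ S)
    (hx1 : ∃ t, t ∈ M1.carrier ∧ Sum.inl t = x)
    (hx0 : ¬ ∃ z, z ∈ M0.carrier ∧ Sum.inl (f1 z) = x)
    (hy2 : ∃ m, m ∈ M2.carrier ∧ g2f M0 f1 f2 m = y)
    (hy0 : ¬ ∃ z, z ∈ M0.carrier ∧ Sum.inl (f1 z) = y) :
    ∃ u v, u ∈ M0.carrier ∧ v ∈ M0.carrier ∧ u ≠ v ∧ S = gL M0 M1 M2 f1 f2 u v := by
  rcases hS with ⟨p, q, -, -, -, rfl, -⟩ | ⟨p, q, -, -, -, rfl, -⟩ |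
    ⟨u, v, hu, hv, huv, rfl⟩
  · obtain ⟨t, ⟨-, htc⟩, rfl⟩ := hy
    exact absurd (c1c2_c0 hf1 hf2 ⟨t, htc, rfl⟩ hy2) hy0
  · obtain ⟨m, ⟨-, hmc⟩, rfl⟩ := hx
    exact absurd (c1c2_c0 hf1 hf2 hx1 ⟨m, hmc, rfl⟩) hx0
  · exact ⟨u, v, hu, hv, huv, rfl⟩

include hf1 hf2 in
lemma K3 {u v u' v' : V0} (hu : u ∈ M0.carrier) (hv : v ∈ M0.carrier)
    (hu' : u' ∈ M0.carrier) (hv' : v' ∈ M0.carrier) (huv : u ≠ v) (hu'v' : u' ≠ v')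
    {q : V1 ⊕ V2} (hq1 : q ∈ gL M0 M1 M2 f1 f2 u v) (hq2 : q ∈ gL M0 M1 M2 f1 f2 u' v')
    (hq0 : ¬ ∃ z, z ∈ M0.carrier ∧ Sum.inl (f1 z) = q) :
    gL M0 M1 M2 f1 f2 u v = gL M0 M1 M2 f1 f2 u' v' := by
  by_cases hL0 : lineOf M0.R u v = lineOf M0.R u' v'
  · refine gL_congr hf1 hf2 hu' hv' hu hv hu'v' huv ?_ ?_
    · exact hL0 ▸ lineOf_left _ _
    · exact hL0 ▸ lineOf_right _ _
  · exfalso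
    match q, hq1, hq2, hq0 with
    | Sum.inl t, hq1, hq2, hq0 =>
      obtain ⟨h1, htc⟩ := mem_gL_inl hf1 hf2 hu hv hq1
      obtain ⟨h2, -⟩ := mem_gL_inl hf1 hf2 hu' hv' hq2
      obtain ⟨z, hz, rfl, -, -⟩ :=
        common_pt_M1 hf1 hu hv hu' hv' huv hu'v' hL0 htc h1 h2
      exact hq0 ⟨z, hz, rfl⟩
    | Sum.inr s, hq1, hq2, hq0 =>
      obtain ⟨h1, hsc, hg⟩ := mem_gL_inr hq1
      obtain ⟨h2, -, -⟩ := mem_gL_inr hq2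
      obtain ⟨z, hz, rfl, -, -⟩ :=
        common_pt_M2 hf2 hu hv hu' hv' huv hu'v' hL0 hsc h1 h2
      rw [g2f_base hf2 hz] at hg
      exact absurd hg (by simp)

include hf1 hf2 in
lemma two_c0_line {q : V1 ⊕ V2} {z1 z2 : V0} (hz1 : z1 ∈ M0.carrier)
    (hz2 : z2 ∈ M0.carrier) (hz12 : z1 ≠ z2)
    (hq1 : ∃ t, t ∈ M1.carrier ∧ Sum.inl t = q)
    (hq0 : ¬ ∃ z, z ∈ M0.carrier ∧ Sum.inl (f1 z) = q)
    (hR : R3 M0 M1 M2 f1 f2 q (Sum.inl (f1 z1)) (Sum.inl (f1 z2))) :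
    ∃ u v, u ∈ M0.carrier ∧ v ∈ M0.carrier ∧ u ≠ v ∧
      q ∈ gL M0 M1 M2 f1 f2 u v ∧ Sum.inl (f1 z1) ∈ gL M0 M1 M2 f1 f2 u v ∧
      Sum.inl (f1 z2) ∈ gL M0 M1 M2 f1 f2 u v := by
  obtain ⟨S, hS, hqS, h1S, h2S⟩ := R3_good hf1 hf2 hR
  rcases hS with ⟨p, q', hp, hq', hpq', rfl, hpure⟩ | ⟨p, q', -, -, -, rfl, -⟩ |
    ⟨u, v, hu, hv, huv, rfl⟩
  · exfalso
    obtain ⟨t1, ⟨ht1l, -⟩, he1⟩ := h1S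
    obtain ⟨t2, ⟨ht2l, -⟩, he2⟩ := h2S
    obtain rfl := Sum.inl.inj he1
    obtain rfl := Sum.inl.inj he2
    exact hpure ⟨z1, z2, hz1, hz2, hz12, ht1l, ht2l⟩
  · exfalso
    obtain ⟨m, ⟨-, hmc⟩, he⟩ := hqS
    exact hq0 (c1c2_c0 hf1 hf2 hq1 ⟨m, hmc, he⟩)
  · exact ⟨u, v, hu, hv, huv, hqS, h1S, h2S⟩

end OmitsSec

section OmitsMain

include hf1 hf2 in
lemma M3_omits (P : ProjPlane) (hO1 : Omits M1 P) (hO2 : Omits M2 P) :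
    Omits (M3 M0 M1 M2 f1 f2 hf1 hf2) P := by
  rintro ⟨e, einj, emem, erel⟩
  by_cases hall1 : ∀ p, ∃ t, t ∈ M1.carrier ∧ Sum.inl t = e p
  · refine hO1 ⟨fun p => (hall1 p).choose, ?_, fun p => (hall1 p).choose_spec.1, ?_⟩
    · intro p q hpq
      apply einj
      exact ((hall1 p).choose_spec.2.symm.trans
        (congrArg Sum.inl hpq)).trans (hall1 q).choose_spec.2
    · intro a b c
      rw [erel a b c]
      have h := rel1_iff hf1 hf2 (hall1 a).choose_spec.1 (hall1 b).choose_spec.1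
        (hall1 c).choose_spec.1
      rw [(hall1 a).choose_spec.2, (hall1 b).choose_spec.2, (hall1 c).choose_spec.2] at h
      exact h.symm
  · by_cases hall2 : ∀ p, ∃ m, m ∈ M2.carrier ∧ g2f M0 f1 f2 m = e p
    · refine hO2 ⟨fun p => (hall2 p).choose, ?_, fun p => (hall2 p).choose_spec.1, ?_⟩
      · intro p q hpq
        apply einj
        exact ((hall2 p).choose_spec.2.symm.trans
          (congrArg (g2f M0 f1 f2) hpq)).trans (hall2 q).choose_spec.2
      · intro a b c
        rw [erel a b c]
        have h := rel2_iff hf1 hf2 (hall2 a).choose_spec.1 (hall2 b).choose_spec.1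
          (hall2 c).choose_spec.1
        rw [(hall2 a).choose_spec.2, (hall2 b).choose_spec.2, (hall2 c).choose_spec.2] at h
        exact h.symm
    · obtain ⟨py, hpy1⟩ := not_forall.1 hall1
      obtain ⟨px, hpx2⟩ := not_forall.1 hall2
      have hx1 : ∃ t, t ∈ M1.carrier ∧ Sum.inl t = e px := by
        rcases emem px with ⟨t, ht, hte⟩ | ⟨m, hm, hme⟩
        · exact ⟨t, ht, hte⟩
        · exact absurd ⟨m, hm, hme⟩ hpx2
      have hy2 : ∃ m, m ∈ M2.carrier ∧ g2f M0 f1 f2 m = e py := by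
        rcases emem py with ⟨t, ht, hte⟩ | ⟨m, hm, hme⟩
        · exact absurd ⟨t, ht, hte⟩ hpy1
        · exact ⟨m, hm, hme⟩
      have hx0 : ¬ ∃ z, z ∈ M0.carrier ∧ Sum.inl (f1 z) = e px := by
        rintro ⟨z, hz, hze⟩
        exact hpx2 ⟨f2 z, hf2.maps _ hz, by rw [g2f_base hf2 hz, hze]⟩
      have hy0 : ¬ ∃ z, z ∈ M0.carrier ∧ Sum.inl (f1 z) = e py := by
        rintro ⟨z, hz, hze⟩
        exact hpy1 ⟨f1 z, hf1.maps _ hz, hze⟩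
      have hpxy : px ≠ py := by
        rintro rfl
        exact hpy1 hx1
      obtain ⟨t0, ht0⟩ := P.Rmat_third hpxy
      have hR0' : R3 M0 M1 M2 f1 f2 (e px) (e py) (e t0) := (erel px py t0).1 ht0
      obtain ⟨S0, hS0, hx_S0, hy_S0, -⟩ := R3_good hf1 hf2 hR0'
      obtain ⟨u0, v0, hu0, hv0, hu0v0, hS0eq⟩ :=
        K1 hf1 hf2 hS0 hx_S0 hy_S0 hx1 hx0 hy2 hy0
      rw [hS0eq] at hx_S0 hy_S0
      have hgood0 : Good M0 M1 M2 f1 f2 (gL M0 M1 M2 f1 f2 u0 v0) :=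
        Or.inr (Or.inr ⟨u0, v0, hu0, hv0, hu0v0, rfl⟩)
      have stepA2 : ∀ r, (∃ m, m ∈ M2.carrier ∧ g2f M0 f1 f2 m = e r) →
          (¬ ∃ z, z ∈ M0.carrier ∧ Sum.inl (f1 z) = e r) →
          r = py ∨ P.Rmat px py r := by
        intro r hr2 hr0
        by_cases hrpy : r = py
        · exact Or.inl hrpy
        right
        have hrpx : r ≠ px := by
          rintro rfl
          exact hr0 (c1c2_c0 hf1 hf2 hx1 hr2)
        obtain ⟨t1, ht1⟩ := P.Rmat_third (Ne.symm hrpx)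
        have hR1' : R3 M0 M1 M2 f1 f2 (e px) (e r) (e t1) := (erel px r t1).1 ht1
        obtain ⟨S1, hS1, hx_S1, hr_S1, -⟩ := R3_good hf1 hf2 hR1'
        obtain ⟨u1, v1, hu1, hv1, hu1v1, hS1eq⟩ :=
          K1 hf1 hf2 hS1 hx_S1 hr_S1 hx1 hx0 hr2 hr0
        rw [hS1eq] at hx_S1 hr_S1
        have hgleq := K3 hf1 hf2 hu0 hv0 hu1 hv1 hu0v0 hu1v1 hx_S0 hx_S1 hx0
        have hr_in : e r ∈ gL M0 M1 M2 f1 f2 u0 v0 := hgleq ▸ hr_S1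
        refine (erel px py r).2 (GoodTriple hgood0 hx_S0 hy_S0 hr_in
          (einj.ne hpxy) (einj.ne hrpx.symm) (einj.ne (Ne.symm hrpy)))
      have stepA1 : ∀ r, (∃ t, t ∈ M1.carrier ∧ Sum.inl t = e r) →
          (¬ ∃ z, z ∈ M0.carrier ∧ Sum.inl (f1 z) = e r) →
          r = px ∨ P.Rmat px py r := by
        intro r hr1 hr0
        by_cases hrpx : r = px
        · exact Or.inl hrpx
        right
        have hrpy : r ≠ py := by
          rintro rfl
          exact hpy1 hr1
        obtain ⟨t1, ht1⟩ := P.Rmat_third (Ne.symm hrpy)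
        have hR1' : R3 M0 M1 M2 f1 f2 (e py) (e r) (e t1) := (erel py r t1).1 ht1
        obtain ⟨S1, hS1, hy_S1, hr_S1, -⟩ := R3_good hf1 hf2 hR1'
        obtain ⟨u1, v1, hu1, hv1, hu1v1, hS1eq⟩ :=
          K1 hf1 hf2 hS1 hr_S1 hy_S1 hr1 hr0 hy2 hy0
        rw [hS1eq] at hy_S1 hr_S1
        have hgleq := K3 hf1 hf2 hu0 hv0 hu1 hv1 hu0v0 hu1v1 hy_S0 hy_S1 hy0
        have hr_in : e r ∈ gL M0 M1 M2 f1 f2 u0 v0 := hgleq ▸ hr_S1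
        refine (erel px py r).2 (GoodTriple hgood0 hx_S0 hy_S0 hr_in
          (einj.ne hpxy) (einj.ne (Ne.symm hrpx)) (einj.ne (Ne.symm hrpy)))
      obtain ⟨-, r1, s1, r2, s2, hRr1s1, hRr2s2, hn1, hn2, hn3, hn4,
        hne1, hne2, hne3, hne4, hnr12, hr12⟩ := P.plane_config hpxy
      have toC0 : ∀ w, ¬ P.Rmat px py w → w ≠ px → w ≠ py →
          ∃ z, z ∈ M0.carrier ∧ Sum.inl (f1 z) = e w := by
        intro w hnw hwx hwy
        by_contra hw0
        rcases emem w with ⟨t, ht, hte⟩ | ⟨m, hm, hme⟩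
        · rcases stepA1 w ⟨t, ht, hte⟩ hw0 with he | hcol
          exacts [hwx he, hnw hcol]
        · rcases stepA2 w ⟨m, hm, hme⟩ hw0 with he | hcol
          exacts [hwy he, hnw hcol]
      obtain ⟨z1, hz1, hze1⟩ := toC0 r1 hn1 (hRr1s1.1).symm hne1
      obtain ⟨w1, hw1, hwe1⟩ := toC0 s1 hn2 (hRr1s1.2.1).symm hne2
      obtain ⟨z2, hz2, hze2⟩ := toC0 r2 hn3 (hRr2s2.1).symm hne3
      obtain ⟨w2, hw2, hwe2⟩ := toC0 s2 hn4 (hRr2s2.2.1).symm hne4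
      have hRa : R3 M0 M1 M2 f1 f2 (e px) (Sum.inl (f1 z1)) (Sum.inl (f1 w1)) := by
        rw [hze1, hwe1]
        exact (erel px r1 s1).1 hRr1s1
      have hRb : R3 M0 M1 M2 f1 f2 (e px) (Sum.inl (f1 z2)) (Sum.inl (f1 w2)) := by
        rw [hze2, hwe2]
        exact (erel px r2 s2).1 hRr2s2
      have hz1w1 : z1 ≠ w1 := by
        rintro rfl
        exact hRr1s1.2.2.1 (einj (hze1.symm ▸ hwe1 ▸ rfl))
      have hz2w2 : z2 ≠ w2 := by
        rintro rfl
        exact hRr2s2.2.2.1 (einj (hze2.symm ▸ hwe2 ▸ rfl))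
      obtain ⟨u, v, hu, hv, huv, hxgl, hr1gl, -⟩ :=
        two_c0_line hf1 hf2 hz1 hw1 hz1w1 hx1 hx0 hRa
      obtain ⟨u', v', hu', hv', hu'v', hxgl', hr2gl, -⟩ :=
        two_c0_line hf1 hf2 hz2 hw2 hz2w2 hx1 hx0 hRb
      have hgleq := K3 hf1 hf2 hu hv hu' hv' huv hu'v' hxgl hxgl' hx0
      have hgood : Good M0 M1 M2 f1 f2 (gL M0 M1 M2 f1 f2 u v) :=
        Or.inr (Or.inr ⟨u, v, hu, hv, huv, rfl⟩)
      have hr1in : e r1 ∈ gL M0 M1 M2 f1 f2 u v := hze1 ▸ hr1gl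
      have hr2in : e r2 ∈ gL M0 M1 M2 f1 f2 u v := by
        rw [hgleq]
        exact hze2 ▸ hr2gl
      refine hnr12 ((erel px r1 r2).2 (GoodTriple hgood hxgl hr1in hr2in
        (einj.ne hRr1s1.1) (einj.ne hRr2s2.1) (einj.ne hr12)))

end OmitsMain

end Amalg
end Amalgam
/-- the class of finite simple ∧-matroids of rank ≤ 3 omitting the matroid
of a fixed finite projective plane `P` has the amalgamation property. -/
theorem amalgamation_property_omitting (P : ProjPlane) [Finite P.Point] [Finite P.Line]
    (V0 V1 V2 : Type) (M0 : WM V0) (M1 : WM V1) (M2 : WM V2)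
    (h0 : M0.carrier.Finite) (h1 : M1.carrier.Finite) (h2 : M2.carrier.Finite)
    (hO0 : Omits M0 P) (hO1 : Omits M1 P) (hO2 : Omits M2 P)
    (f1 : V0 → V1) (f2 : V0 → V2)
    (hf1 : IsEmb M0 M1 f1) (hf2 : IsEmb M0 M2 f2) :
    ∃ (W : Type) (M3 : WM W) (g1 : V1 → W) (g2 : V2 → W),
      M3.carrier.Finite ∧ Omits M3 P ∧ IsEmb M1 M3 g1 ∧ IsEmb M2 M3 g2 ∧
      ∀ x ∈ M0.carrier, g1 (f1 x) = g2 (f2 x) := by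
  refine ⟨V1 ⊕ V2, Amalg.M3 M0 M1 M2 f1 f2 hf1 hf2, Sum.inl, Amalg.g2f M0 f1 f2,
    ?_, Amalg.M3_omits hf1 hf2 P hO1 hO2, ?_, ?_, ?_⟩
  · exact (h1.image Sum.inl).union (h2.image (Amalg.g2f M0 f1 f2))
  · exact ⟨fun x hx => Or.inl ⟨x, hx, rfl⟩,
      fun x _ y _ h => Sum.inl.inj h,
      fun a ha b hb c hc => Amalg.rel1_iff hf1 hf2 ha hb hc,
      fun a ha b hb c hc d hd => Amalg.wedge1_pres hf1 hf2 ha hb hc hd⟩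
  · exact ⟨fun x hx => Or.inr ⟨x, hx, rfl⟩,
      fun x _ y _ h => Amalg.g2f_inj hf1 h,
      fun a ha b hb c hc => Amalg.rel2_iff hf1 hf2 ha hb hc,
      fun a ha b hb c hc d hd => Amalg.wedge2_pres hf1 hf2 ha hb hc hd⟩
  · exact fun x hx => (Amalg.g2f_base hf2 hx).symm
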